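/- arXiv:1412.8083 — 9 statements merged into one kernel-verified Lean document; each statement's English description precedes it below -/
import Mathlib

section
/- If G is a graph on n vertices that contains no cycle of length ℓ (ℓ ≥ 3), then the number of triangles in G is at most (ℓ - 3)/3 times the number of edges of G. -/
/-- `G` contains no cycle of length `ℓ`. -/
def CycleFree {V : Type*} (G : SimpleGraph V) (ℓ : ℕ) : Prop :=
  ∀ (v : V) (c : G.Walk v v), c.IsCycle → c.length ≠ ℓ

/-!
A path on `ℓ - 1` vertices inside the neighbourhood `N(v)` would close up through `v` into a
cycle of length `ℓ`, so by the Erdős–Gallai bound `N(v)` spans at most `(ℓ - 3) deg v / 2`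
edges. The triangles through `v` are exactly these edges, and every triangle passes through
three vertices, so summing over `v` gives `3 T ≤ (ℓ - 3) e(G)`.

The Erdős–Gallai bound `2 e(s) ≤ (k - 2) |s|` for a vertex set `s` spanning no path on `k`
vertices is proved by induction on `|s|`: a vertex of degree at most `(k - 2) / 2` can be
deleted. Otherwise the two ends of a longest path have degrees adding up to at least its number
of vertices, so the path can be rotated into a cycle; maximality then makes its vertex set
closed under adjacency, and it splits off with fewer than `k` vertices.
-/

open Finset

namespace List

variable {α : Type*} {R : α → α → Prop} {l₁ l₂ : List α}

theorem IsChain.append_comm_of_rel (h : IsChain R (l₁ ++ l₂))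
    (hR : ∀ x ∈ l₂.getLast?, ∀ y ∈ l₁.head?, R x y) : IsChain R (l₂ ++ l₁) :=
  h.right_of_append.append h.left_of_append hR

theorem IsChain.reverse_append (hR : ∀ a b, R a b → R b a) (h : IsChain R (l₁ ++ l₂))
    (hhead : ∀ x ∈ l₁.head?, ∀ y ∈ l₂.head?, R x y) : IsChain R (l₁.reverse ++ l₂) :=
  (isChain_reverse.2 (h.left_of_append.imp fun a b => hR a b)).append h.right_of_append
    (by simpa only [getLast?_reverse] using hhead)

end List

theorem Finset.card_filter_le_card_filter_range_getD {α : Type*} {s : Finset α} {P : α → Prop}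
    [DecidablePred P] (L : List α) (d : α) (h : ∀ w ∈ s, P w → w ∈ L) :
    #{w ∈ s | P w} ≤ #{i ∈ range L.length | P (L.getD i d)} := by
  refine card_le_card_of_surjOn (L.getD · d) fun w hw => ?_
  rw [coe_filter, Set.mem_ofPred_eq] at hw
  obtain ⟨i, hi, rfl⟩ := List.mem_iff_getElem.1 (h _ hw.1 hw.2)
  exact ⟨i, by simpa [hi, List.getD_eq_getElem] using hw.2, List.getD_eq_getElem _ _ hi⟩

namespace SimpleGraph

variable {V : Type*} (G : SimpleGraph V)

structure IsPathIn (s : Finset V) (l : List V) : Prop where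
  isChain : l.IsChain G.Adj
  nodup : l.Nodup
  mem : ∀ x ∈ l, x ∈ s

def HasPathIn (s : Finset V) (k : ℕ) : Prop :=
  ∃ l, G.IsPathIn s l ∧ l.length = k

variable {G} {s t : Finset V} {l : List V} {k : ℕ}

namespace IsPathIn

theorem mono (hl : G.IsPathIn s l) (hst : s ⊆ t) : G.IsPathIn t l :=
  ⟨hl.isChain, hl.nodup, fun x hx => hst (hl.mem x hx)⟩

theorem reverse (hl : G.IsPathIn s l) : G.IsPathIn s l.reverse :=
  ⟨List.isChain_reverse.2 (hl.isChain.imp fun _ _ h => h.symm), List.nodup_reverse.2 hl.nodup,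
    fun x hx => hl.mem x (List.mem_reverse.1 hx)⟩

theorem length_le_card (hl : G.IsPathIn s l) : l.length ≤ #s := by
  classical
  rw [← List.toFinset_card_of_nodup hl.nodup]
  exact card_le_card fun x hx => hl.mem x (List.mem_toFinset.1 hx)

theorem hasPathIn_of_le_length (hl : G.IsPathIn s l) (hk : k ≤ l.length) : G.HasPathIn s k :=
  ⟨l.take k, ⟨hl.isChain.take k, hl.nodup.sublist (List.take_sublist _ _),
    fun x hx => hl.mem x (List.mem_of_mem_take hx)⟩, by simp [hk]⟩

end IsPathIn

theorem HasPathIn.mono (h : G.HasPathIn s k) (hst : s ⊆ t) : G.HasPathIn t k :=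
  let ⟨l, hl, hlk⟩ := h
  ⟨l, hl.mono hst, hlk⟩

theorem exists_longest_isPathIn (hs : s.Nonempty) :
    ∃ l, G.IsPathIn s l ∧ l ≠ [] ∧ ∀ l', G.IsPathIn s l' → l'.length ≤ l.length := by
  classical
  obtain ⟨v, hv⟩ := hs
  have h1 : G.HasPathIn s 1 := ⟨[v], ⟨.singleton v, List.nodup_singleton v, by simpa⟩, rfl⟩
  have hs1 : 1 ≤ #s := card_pos.2 ⟨v, hv⟩
  obtain ⟨l, hl, hlen⟩ := Nat.findGreatest_spec hs1 h1
  refine ⟨l, hl, fun hnil => ?_, fun l' hl' =>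
    hlen ▸ Nat.le_findGreatest hl'.length_le_card ⟨l', hl', rfl⟩⟩
  have := Nat.le_findGreatest hs1 h1
  simp [hnil] at hlen
  omega

theorem IsPathIn.mem_of_adj_head (hl : G.IsPathIn s l)
    (hmax : ∀ l', G.IsPathIn s l' → l'.length ≤ l.length) {a w : V} (ha : a ∈ l.head?)
    (hw : w ∈ s) (haw : G.Adj a w) : w ∈ l := by
  by_contra hwl
  have hpath : G.IsPathIn s (w :: l) :=
    ⟨hl.isChain.cons fun y hy => Option.mem_unique ha hy ▸ haw.symm, hl.nodup.cons hwl,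
      List.forall_mem_cons.2 ⟨hw, hl.mem⟩⟩
  simpa using hmax _ hpath

theorem IsPathIn.mem_of_adj_getLast (hl : G.IsPathIn s l)
    (hmax : ∀ l', G.IsPathIn s l' → l'.length ≤ l.length) {b w : V} (hb : b ∈ l.getLast?)
    (hw : w ∈ s) (hbw : G.Adj b w) : w ∈ l :=
  List.mem_reverse.1 <| hl.reverse.mem_of_adj_head (by simpa using hmax)
    (by rwa [List.head?_reverse]) hw hbw

/-- Pósa's rotation: by pigeonhole on the neighbours of the ends `a` and `b`, some `i` has
`a ~ l[i+1]` and `b ~ l[i]`, and then `l[i], …, l[0], l[i+1], …, b` closes up into a cycle. -/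
theorem IsPathIn.exists_perm_isChain_cyclic [DecidableRel G.Adj] (hl : G.IsPathIn s l)
    (hmax : ∀ l', G.IsPathIn s l' → l'.length ≤ l.length) {a b : V} (ha : a ∈ l.head?)
    (hb : b ∈ l.getLast?) (hdeg : l.length ≤ #{w ∈ s | G.Adj a w} + #{w ∈ s | G.Adj b w}) :
    ∃ c : List V, c.Perm l ∧ c.IsChain G.Adj ∧ ∀ x ∈ c.getLast?, ∀ y ∈ c.head?, G.Adj x y := by
  set m := l.length - 1
  have hA : #{w ∈ s | G.Adj a w} ≤ #{i ∈ range m | G.Adj a (l.tail.getD i a)} := by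
    rw [show m = l.tail.length from (List.length_tail).symm]
    refine card_filter_le_card_filter_range_getD _ _ fun w hw haw => ?_
    have hwl := hl.mem_of_adj_head hmax ha hw haw
    rw [List.eq_cons_of_mem_head? ha] at hwl
    exact (List.mem_cons.1 hwl).resolve_left haw.ne'
  have hB : #{w ∈ s | G.Adj b w} ≤ #{i ∈ range m | G.Adj b (l.dropLast.getD i b)} := by
    rw [show m = l.dropLast.length from (List.length_dropLast).symm]
    refine card_filter_le_card_filter_range_getD _ _ fun w hw hbw => ?_
    have hwl := hl.mem_of_adj_getLast hmax hb hw hbw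
    rw [← List.dropLast_append_getLast? b hb, List.mem_append, List.mem_singleton] at hwl
    exact hwl.resolve_right hbw.ne'
  have hlen : 0 < l.length := by rw [List.eq_cons_of_mem_head? ha]; simp
  obtain ⟨i, hi⟩ := inter_nonempty_of_card_lt_card_add_card
    (filter_subset (fun i => G.Adj a (l.tail.getD i a)) (range m))
    (filter_subset (fun i => G.Adj b (l.dropLast.getD i b)) _) (by rw [card_range]; omega)
  simp only [mem_inter, mem_filter, mem_range] at hi
  obtain ⟨⟨him, hai⟩, -, hbi⟩ := hi
  have hi1 : i + 1 < l.length := by omega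
  rw [List.getD_eq_getElem _ _ (by simp; omega), List.getElem_tail] at hai
  rw [List.getD_eq_getElem _ _ (by simp; omega), List.getElem_dropLast] at hbi
  refine ⟨(l.take (i + 1)).reverse ++ l.drop (i + 1),
    ((List.reverse_perm _).append_right _).trans (by rw [List.take_append_drop]), ?_, ?_⟩
  · refine (List.take_append_drop (i + 1) l ▸ hl.isChain).reverse_append (fun _ _ h => h.symm) ?_
    intro x hx y hy
    rw [List.head?_take, if_neg (by omega)] at hx
    rw [List.head?_drop, List.getElem?_eq_getElem hi1, Option.mem_some_iff] at hy
    exact Option.mem_unique ha hx ▸ hy ▸ hai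
  · intro x hx y hy
    rw [List.getLast?_append, List.getLast?_drop, if_neg (by omega), Option.mem_def.1 hb,
      Option.some_or, Option.mem_some_iff] at hx
    rw [List.head?_append, List.head?_reverse, List.getLast?_take, if_neg (by omega),
      Nat.add_sub_cancel, List.getElem?_eq_getElem (by omega), Option.some_or, Option.some_or,
      Option.mem_some_iff] at hy
    exact hx ▸ hy ▸ hbi

theorem IsPathIn.mem_of_adj_of_perm_isChain_cyclic (hl : G.IsPathIn s l)
    (hmax : ∀ l', G.IsPathIn s l' → l'.length ≤ l.length) {c : List V} (hcl : c.Perm l)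
    (hc : c.IsChain G.Adj) (hcyc : ∀ x ∈ c.getLast?, ∀ y ∈ c.head?, G.Adj x y) {z w : V}
    (hz : z ∈ l) (hw : w ∈ s) (hzw : G.Adj z w) : w ∈ l := by
  by_contra hwl
  obtain ⟨c₁, c₂, rfl⟩ := List.append_of_mem (hcl.mem_iff.2 hz)
  have hrot : (z :: c₂ ++ c₁).IsChain G.Adj := hc.append_comm_of_rel fun x hx y hy =>
    hcyc x (by simp_all [List.getLast?_append]) y (by simp_all [List.head?_append])
  have hperm : (z :: c₂ ++ c₁).Perm l := List.perm_append_comm.trans hcl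
  have hpath : G.IsPathIn s (w :: (z :: c₂ ++ c₁)) :=
    ⟨hrot.cons (by simpa using hzw.symm),
      (hperm.nodup_iff.2 hl.nodup).cons (hperm.mem_iff.not.2 hwl),
      List.forall_mem_cons.2 ⟨hw, fun x hx => hl.mem x (hperm.mem_iff.1 hx)⟩⟩
  have := hmax _ hpath
  simp [← hperm.length_eq] at this

theorem exists_adj_closed_of_not_hasPathIn [DecidableRel G.Adj] (hs : s.Nonempty)
    (hk : ¬ G.HasPathIn s k) (hdeg : ∀ v ∈ s, k - 1 ≤ 2 * #{w ∈ s | G.Adj v w}) :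
    ∃ T ⊆ s, T.Nonempty ∧ #T < k ∧ ∀ x ∈ T, ∀ y ∈ s, G.Adj x y → y ∈ T := by
  classical
  obtain ⟨l, hl, hne, hmax⟩ := G.exists_longest_isPathIn hs
  have hlk : l.length < k := lt_of_not_ge fun h => hk (hl.hasPathIn_of_le_length h)
  have ha : l.head hne ∈ l.head? := List.head?_eq_some_head hne
  have hb : l.getLast hne ∈ l.getLast? := List.getLast?_eq_some_getLast hne
  have hdega := hdeg _ (hl.mem _ (List.head_mem hne))
  have hdegb := hdeg _ (hl.mem _ (List.getLast_mem hne))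
  obtain ⟨c, hcl, hc, hcyc⟩ := hl.exists_perm_isChain_cyclic hmax ha hb (by omega)
  refine ⟨l.toFinset, fun x hx => hl.mem x (List.mem_toFinset.1 hx), ?_, ?_,
    fun x hx y hy hxy => ?_⟩
  · simpa [List.toFinset_nonempty_iff]
  · rwa [List.toFinset_card_of_nodup hl.nodup]
  · exact List.mem_toFinset.2 <|
      hl.mem_of_adj_of_perm_isChain_cyclic hmax hcl hc hcyc (List.mem_toFinset.1 hx) hy hxy

section Interedges

variable [DecidableRel G.Adj]

theorem card_interedges_comm (s t : Finset V) : #(G.interedges s t) = #(G.interedges t s) :=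
  card_nbij' Prod.swap Prod.swap (fun _ hx => G.swap_mem_interedges_iff.2 hx)
    (fun _ hx => G.swap_mem_interedges_iff.2 hx) (fun _ _ => rfl) fun _ _ => rfl

theorem card_interedges_self_le (s : Finset V) : #(G.interedges s s) ≤ #s * (#s - 1) := by
  rw [Nat.mul_sub_one, ← offDiag_card]
  refine card_le_card fun x hx => ?_
  rw [mem_interedges_iff] at hx
  exact mem_offDiag.2 ⟨hx.1, hx.2.1, hx.2.2.ne⟩

theorem card_interedges_singleton_left (v : V) (t : Finset V) :
    #(G.interedges {v} t) = #{w ∈ t | G.Adj v w} :=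
  card_nbij' Prod.snd (Prod.mk v)
    (fun x hx => by obtain ⟨hxv, hx⟩ := G.mem_interedges_iff.1 hx; simp_all)
    (fun w hw => by simp_all [mem_interedges_iff])
    (fun x hx => by simp_all [mem_interedges_iff, Prod.ext_iff]) fun _ _ => rfl

variable [DecidableEq V]

theorem card_interedges_union_self {T U : Finset V} (h : Disjoint T U) :
    #(G.interedges (T ∪ U) (T ∪ U)) =
      #(G.interedges T T) + #(G.interedges U U) + 2 * #(G.interedges T U) := by
  have hleft (t : Finset V) : G.interedges (T ∪ U) t = G.interedges T t ∪ G.interedges U t := by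
    ext; simp only [mem_interedges_iff, mem_union]; tauto
  have hright (t : Finset V) : G.interedges t (T ∪ U) = G.interedges t T ∪ G.interedges t U := by
    ext; simp only [mem_interedges_iff, mem_union]; tauto
  rw [hleft, card_union_of_disjoint (G.interedges_disjoint_left h _), hright, hright,
    card_union_of_disjoint (G.interedges_disjoint_right _ h),
    card_union_of_disjoint (G.interedges_disjoint_right _ h), G.card_interedges_comm U T]
  ring

end Interedges

/-- The Erdős–Gallai bound `2 e(s) ≤ (k - 2) |s|`, with `e(s)` counted in ordered pairs. -/
theorem card_interedges_le_of_not_hasPathIn [DecidableRel G.Adj] [DecidableEq V]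
    (hs : ¬ G.HasPathIn s k) : #(G.interedges s s) ≤ (k - 2) * #s := by
  induction s using Finset.strongInduction with | H s ih => ?_
  by_cases hlow : ∃ v ∈ s, 2 * #{w ∈ s | G.Adj v w} ≤ k - 2
  · obtain ⟨v, hv, hdeg⟩ := hlow
    have hdisj : Disjoint {v} (s.erase v) := disjoint_singleton_left.2 (notMem_erase v s)
    have hloop : G.interedges {v} {v} = ∅ := by
      ext x; simp only [mem_interedges_iff, mem_singleton, notMem_empty, iff_false]
      rintro ⟨h1, h2, h⟩; exact h.ne (h1.trans h2.symm)
    have hv' : #{w ∈ s.erase v | G.Adj v w} ≤ #{w ∈ s | G.Adj v w} :=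
      card_le_card (filter_subset_filter _ (erase_subset v s))
    have herase := ih _ (erase_ssubset hv) fun h => hs (h.mono (erase_subset v s))
    have hcard := card_erase_add_one hv
    rw [← insert_erase hv, insert_eq, G.card_interedges_union_self hdisj, hloop,
      card_interedges_singleton_left, ← insert_eq, insert_erase hv]
    calc _ ≤ 0 + (k - 2) * #(s.erase v) + (k - 2) := by simp only [card_empty]; omega
      _ = (k - 2) * #s := by rw [← hcard]; ring
  · push Not at hlow
    obtain rfl | hne := s.eq_empty_or_nonempty
    · simp
    obtain ⟨T, hTs, hTne, hTk, hT⟩ :=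
      G.exists_adj_closed_of_not_hasPathIn hne hs fun v hv => by have := hlow v hv; omega
    have hcross : G.interedges T (s \ T) = ∅ := by
      ext x; simp only [mem_interedges_iff, mem_sdiff, notMem_empty, iff_false]
      rintro ⟨hx, ⟨hy, hyT⟩, hxy⟩; exact hyT (hT _ hx _ hy hxy)
    have hrest := ih _ (sdiff_ssubset hTs hTne) fun h => hs (h.mono sdiff_subset)
    have hTT := G.card_interedges_self_le T
    have hcard := card_sdiff_add_card_eq_card hTs
    rw [← union_sdiff_of_subset hTs, G.card_interedges_union_self disjoint_sdiff, hcross,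
      card_empty, union_sdiff_of_subset hTs]
    calc _ ≤ #T * (k - 2) + (k - 2) * #(s \ T) := by
          have : #T * (#T - 1) ≤ #T * (k - 2) := Nat.mul_le_mul_left _ (by omega)
          omega
      _ = (k - 2) * #s := by rw [← hcard]; ring

theorem sum_card_filter_mem_cliqueFinset [Fintype V] [DecidableEq V] [DecidableRel G.Adj]
    (n : ℕ) : ∑ v, #{t ∈ G.cliqueFinset n | v ∈ t} = n * #(G.cliqueFinset n) := by
  have := sum_card_bipartiteAbove_eq_sum_card_bipartiteBelow (· ∈ ·) (s := univ)
    (t := G.cliqueFinset n)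
  simp only [bipartiteAbove, bipartiteBelow, filter_mem_eq_inter, univ_inter] at this
  rw [this, sum_congr rfl fun t ht => (G.mem_cliqueFinset_iff.1 ht).card_eq, sum_const, smul_eq_mul,
    mul_comm]

theorem two_mul_card_filter_mem_cliqueFinset_three_le [Fintype V] [DecidableEq V]
    [DecidableRel G.Adj] (v : V) :
    2 * #{t ∈ G.cliqueFinset 3 | v ∈ t} ≤
      #(G.interedges (G.neighborFinset v) (G.neighborFinset v)) := by
  refine mul_card_image_le_card_of_maps_to (f := fun p => {v, p.1, p.2}) (fun p hp => ?_) 2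
    fun t ht => ?_
  · obtain ⟨ha, hb, hab⟩ := G.mem_interedges_iff.1 hp
    rw [mem_neighborFinset] at ha hb
    exact mem_filter.2 ⟨G.mem_cliqueFinset_iff.2 (is3Clique_triple_iff.2 ⟨ha, hb, hab⟩),
      mem_insert_self _ _⟩
  · obtain ⟨ht, hvt⟩ := mem_filter.1 ht
    have hclique := G.mem_cliqueFinset_iff.1 ht
    obtain ⟨a, b, hab, hteq⟩ := card_eq_two.1 (by rw [card_erase_of_mem hvt, hclique.card_eq] :
      #(t.erase v) = 2)
    rw [← insert_erase hvt, hteq] at hclique ⊢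
    obtain ⟨hva, hvb, hadj⟩ := is3Clique_triple_iff.1 hclique
    calc 2 = #{(a, b), (b, a)} := (card_pair (by simp [hab])).symm
      _ ≤ _ := card_le_card <| by
        simp [insert_subset_iff, mk_mem_interedges_iff, hva, hvb, hadj, hadj.symm, pair_comm]

theorem IsPathIn.exists_isCycle {v : V} [Fintype (G.neighborSet v)]
    (hl : G.IsPathIn (G.neighborFinset v) l) (h2 : 2 ≤ l.length) :
    ∃ c : G.Walk v v, c.IsCycle ∧ c.length = l.length + 1 := by
  have hne : l ≠ [] := List.ne_nil_of_length_pos (by omega)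
  have hadj {x} (hx : x ∈ l) : G.Adj v x := (G.mem_neighborFinset v x).1 (hl.mem x hx)
  let p := Walk.ofSupport l hne hl.isChain
  have hp : p.IsPath := by rw [Walk.isPath_def, Walk.support_ofSupport]; exact hl.nodup
  have hvp : v ∉ p.support := by
    rw [Walk.support_ofSupport]; exact fun hv => G.loopless.irrefl v (hadj hv)
  refine ⟨.cons (hadj (List.head_mem hne)) (p.concat (hadj (List.getLast_mem hne)).symm), ?_, ?_⟩
  · rw [Walk.isCycle_iff_isPath_tail_and_le_length]
    refine ⟨by simpa using hp.concat hvp _, ?_⟩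
    simp [p]
    omega
  · simp [p]
    omega

end SimpleGraph

open SimpleGraph

/-- If `G` contains no cycle of length `ℓ` (`ℓ ≥ 3`), then the number of triangles of `G`
is at most `(ℓ - 3)/3` times the number of edges of `G`. -/
theorem stmt0 {V : Type*} [Fintype V] (G : SimpleGraph V) (ℓ : ℕ) (hℓ : 3 ≤ ℓ)
    (hG : CycleFree G ℓ) :
    3 * (G.cliqueSet 3).ncard ≤ (ℓ - 3) * G.edgeSet.ncard := by
  classical
  have hlocal (v : V) : #(G.interedges (G.neighborFinset v) (G.neighborFinset v)) ≤
      (ℓ - 3) * G.degree v := by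
    have hpath : ¬ G.HasPathIn (G.neighborFinset v) (ℓ - 1) := by
      rintro ⟨l, hl, hlen⟩
      obtain ⟨c, hc, hclen⟩ := hl.exists_isCycle (by omega)
      exact hG v c hc (by omega)
    simpa [Nat.sub_sub, card_neighborFinset_eq_degree] using
      G.card_interedges_le_of_not_hasPathIn hpath
  rw [← coe_cliqueFinset, ← coe_edgeFinset, Set.ncard_coe_finset, Set.ncard_coe_finset]
  refine Nat.le_of_mul_le_mul_left ?_ two_pos
  calc 2 * (3 * #(G.cliqueFinset 3))
      = ∑ v, 2 * #{t ∈ G.cliqueFinset 3 | v ∈ t} := by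
        rw [← mul_sum, sum_card_filter_mem_cliqueFinset]
    _ ≤ ∑ v, (ℓ - 3) * G.degree v := sum_le_sum fun v _ =>
        (G.two_mul_card_filter_mem_cliqueFinset_three_le v).trans (hlocal v)
    _ = 2 * ((ℓ - 3) * #G.edgeFinset) := by
        rw [← mul_sum, sum_degrees_eq_twice_card_edges]; ring
end

section
/- Let H be a 3-uniform hypergraph containing no Berge cycle of length ℓ (ℓ ≥ 4). Define the graph G₂ on the vertex set of H whose edges are the pairs {u,v} contained in at least two hyperedges of H. Then G₂ contains no cycle of length ℓ. -/
/-- The hypergraph `H` contains a Berge cycle of length `ℓ`. -/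
def HasBergeCycle {V : Type*} (H : Finset (Finset V)) (ℓ : ℕ) : Prop :=
  ∃ (f : Fin ℓ → Finset V) (v : Fin ℓ → V),
    Function.Injective f ∧ Function.Injective v ∧
    (∀ i, f i ∈ H) ∧ ∀ i : Fin ℓ, v i ∈ f i ∧ v ⟨(↑i + 1) % ℓ, Nat.mod_lt _ i.pos⟩ ∈ f i

/-- The codegree of the pair `{u, v}` in the hypergraph `H`. -/
def codeg {V : Type*} [DecidableEq V] (H : Finset (Finset V)) (u v : V) : ℕ :=
  (H.filter fun E => ({u, v} : Finset V) ⊆ E).card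

/-- The graph on the vertex set of `H` whose edges are the pairs covered at least twice. -/
def shadowGraph {V : Type*} [DecidableEq V] (H : Finset (Finset V)) : SimpleGraph V where
  Adj u v := u ≠ v ∧ 2 ≤ codeg H u v
  symm := by
    constructor
    rintro u v ⟨h1, h2⟩
    refine ⟨h1.symm, ?_⟩
    rwa [codeg, Finset.pair_comm v u]
  loopless := ⟨fun v h => h.1 rfl⟩

open Function

lemma Finset.eq_of_mem_of_card_le_three {α : Type*} [DecidableEq α] {s : Finset α}
    (hs : s.card ≤ 3) {a b c : α} (ha : a ∈ s) (hb : b ∈ s) (hc : c ∈ s)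
    (hab : a ≠ b) (hac : a ≠ c) (hbc : b ≠ c) : s = {a, b, c} := by
  refine (Finset.eq_of_subset_of_card_le ?_ ?_).symm
  · simp [Finset.insert_subset_iff, ha, hb, hc]
  · rw [Finset.card_eq_three.mpr ⟨a, b, c, hab, hac, hbc, rfl⟩]
    exact hs

lemma hasBergeCycle_succ_iff {V : Type*} (H : Finset (Finset V)) (n : ℕ) :
    HasBergeCycle H (n + 1) ↔ ∃ (f : Fin (n + 1) → Finset V) (v : Fin (n + 1) → V),
      Injective f ∧ Injective v ∧ (∀ i, f i ∈ H) ∧ ∀ i, v i ∈ f i ∧ v (i + 1) ∈ f i := by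
  have hsucc : ∀ i : Fin (n + 1), (⟨(↑i + 1) % (n + 1), Nat.mod_lt _ i.pos⟩ : Fin (n + 1)) = i + 1 :=
    fun i => Fin.ext (by simp [Fin.val_add])
  simp only [HasBergeCycle, hsucc]

lemma exists_mem_ne_of_two_le_codeg {V : Type*} [DecidableEq V] {H : Finset (Finset V)}
    {u v : V} (h : 2 ≤ codeg H u v) (T : Finset V) :
    ∃ E ∈ H, ({u, v} : Finset V) ⊆ E ∧ E ≠ T := by
  obtain ⟨E, hE, hET⟩ := Finset.exists_mem_ne h T
  rw [Finset.mem_filter] at hE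
  exact ⟨E, hE.1, hE.2, hET⟩

theorem hasBergeCycle_of_two_le_codeg {V : Type*} [DecidableEq V] {H : Finset (Finset V)}
    (hH : ∀ E ∈ H, E.card ≤ 3) {n : ℕ} (hn : 2 ≤ n) {w : Fin (n + 1) → V} (hw : Injective w)
    (hcodeg : ∀ i, 2 ≤ codeg H (w i) (w (i + 1))) : HasBergeCycle H (n + 1) := by
  have h1 : (1 : Fin (n + 1)) ≠ 0 := by
    rw [Ne, Fin.one_eq_zero_iff]; omega
  have h2 : (2 : Fin (n + 1)) ≠ 0 := by
    rw [Ne, Fin.ext_iff]; simp [Nat.mod_eq_of_lt (show 2 < n + 1 by omega)]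
  have hadd : ∀ i : Fin (n + 1), i + 1 + 1 = i + 2 := fun i => by grind
  have hsucc : ∀ i : Fin (n + 1), w i ≠ w (i + 1) := fun i h =>
    h1 (add_eq_left.mp (hw h).symm)
  have hsucc₂ : ∀ i : Fin (n + 1), w i ≠ w (i + 2) := fun i h =>
    h2 (add_eq_left.mp (hw h).symm)
  have hsucc₁₂ : ∀ i : Fin (n + 1), w (i + 1) ≠ w (i + 2) := fun i => hadd i ▸ hsucc (i + 1)
  choose f hfH hfw hfne using fun i =>
    exists_mem_ne_of_two_le_codeg (hcodeg i) {w i, w (i + 1), w (i + 2)}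
  have hfw₀ : ∀ i, w i ∈ f i := fun i => hfw i (by simp)
  have hfw₁ : ∀ i, w (i + 1) ∈ f i := fun i => hfw i (by simp)
  have hfw₂ : ∀ i, w (i + 2) ∉ f i := fun i h => hfne i <|
    Finset.eq_of_mem_of_card_le_three (hH _ (hfH i)) (hfw₀ i) (hfw₁ i) h
      (hsucc i) (hsucc₂ i) (hsucc₁₂ i)
  refine (hasBergeCycle_succ_iff H n).mpr ⟨f, w, fun i j hij => ?_, hw, hfH,
    fun i => ⟨hfw₀ i, hfw₁ i⟩⟩
  by_contra hne
  by_cases hji : j = i + 1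
  · apply hfw₂ i
    rw [hij, ← hadd, ← hji]
    exact hfw₁ j
  by_cases hij' : i = j + 1
  · apply hfw₂ j
    rw [← hij, ← hadd, ← hij']
    exact hfw₁ i
  have hfi : f i = {w i, w (i + 1), w j} :=
    Finset.eq_of_mem_of_card_le_three (hH _ (hfH i)) (hfw₀ i) (hfw₁ i) (hij ▸ hfw₀ j)
      (hsucc i) (fun h => hne (hw h)) (fun h => hji (hw h).symm)
  have hj₁ : w (j + 1) ∈ f i := hij ▸ hfw₁ j
  simp only [hfi, Finset.mem_insert, Finset.mem_singleton] at hj₁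
  rcases hj₁ with h | h | h
  · exact hij' (hw h).symm
  · exact hne (add_right_cancel (hw h)).symm
  · exact hsucc j h.symm

lemma SimpleGraph.Walk.IsCycle.exists_injective_adj {V : Type*} {G : SimpleGraph V} {u : V}
    {c : G.Walk u u} (hc : c.IsCycle) {n : ℕ} (hn : c.length = n + 1) :
    ∃ w : Fin (n + 1) → V, Injective w ∧ ∀ i, G.Adj (w i) (w (i + 1)) := by
  refine ⟨fun i => c.getVert i, fun i j h => Fin.ext ?_, fun i => ?_⟩
  · exact hc.getVert_injOn' (by simp only [Set.mem_ofPred_eq]; omega)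
      (by simp only [Set.mem_ofPred_eq]; omega) h
  · have hadj := c.adj_getVert_succ (i := i) (by omega)
    change G.Adj (c.getVert i) (c.getVert ↑(i + 1))
    rw [Fin.val_add_one]
    split_ifs with hi
    · rw [c.getVert_zero, hi, Fin.val_last]
      rwa [hi, Fin.val_last, ← hn, c.getVert_length] at hadj
    · exact hadj

theorem stmt4_general {V : Type*} [DecidableEq V] (H : Finset (Finset V)) (ℓ : ℕ)
    (h3 : ∀ E ∈ H, E.card = 3) (hB : ¬ HasBergeCycle H ℓ) :
    CycleFree (shadowGraph H) ℓ := by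
  intro u c hc hlen
  have hlen₃ := hc.three_le_length
  obtain ⟨n, rfl⟩ : ∃ n, ℓ = n + 1 := ⟨ℓ - 1, by omega⟩
  obtain ⟨w, hw, hadj⟩ := hc.exists_injective_adj hlen
  exact hB (hasBergeCycle_of_two_le_codeg (fun E hE => (h3 E hE).le) (by omega) hw
    fun i => (hadj i).2)

/-- If the 3-uniform hypergraph `H` has no Berge cycle of length `ℓ` (`ℓ ≥ 4`), then the
graph of pairs covered at least twice has no cycle of length `ℓ`. -/
theorem stmt4 {V : Type*} [DecidableEq V] (H : Finset (Finset V)) (ℓ : ℕ)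
    (h3 : ∀ E ∈ H, E.card = 3) (hℓ : 4 ≤ ℓ) (hB : ¬ HasBergeCycle H ℓ) :
    CycleFree (shadowGraph H) ℓ :=
  stmt4_general H ℓ h3 hB
end

section
/- Let L be a cycle of length ℓ ≥ 4 in a graph, and let H be a 3-uniform hypergraph such that every edge of L is contained in at least two hyperedges of H. Then for every set S of i edges of L (1 ≤ i ≤ ℓ), the number of hyperedges of H containing at least one edge of S is at least i. -/
/-!
Double count the incidences between `S` and the hyperedges meeting it: each edge of `S` lies in
at least two hyperedges, while a 3-set contains at most two edges of a cycle of length `≠ 3`,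
since its three pairs would form a triangle inside the cycle.
-/

namespace SimpleGraph.Walk

variable {V : Type*} {G : SimpleGraph V}

lemma support_subset_of_forall_mem_edges {u v w : V} (p : G.Walk u v) {T : Set V}
    (hT : ∀ a b, s(a, b) ∈ p.edges → a ∈ T → b ∈ T) (hw : w ∈ p.support) (hwT : w ∈ T) :
    ∀ y ∈ p.support, y ∈ T := by
  induction p generalizing w with
  | nil => simp_all
  | @cons u t v h q ih =>
    have hq : ∀ a b, s(a, b) ∈ q.edges → a ∈ T → b ∈ T := fun a b hab =>
      hT a b (by simp [hab])
    have hut : u ∈ T ↔ t ∈ T :=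
      ⟨hT u t (by simp), hT t u (by simp [Sym2.eq_swap])⟩
    have hqT : ∀ y ∈ q.support, y ∈ T := by
      rcases (support_cons h q ▸ List.mem_cons).mp hw with rfl | hw
      · exact ih hq q.start_mem_support (hut.mp hwT)
      · exact ih hq hw hwT
    intro y hy
    rcases (support_cons h q ▸ List.mem_cons).mp hy with rfl | hy
    · exact hut.mpr (hqT _ q.start_mem_support)
    · exact hqT y hy

namespace IsCycle

lemma neighborSet_toSubgraph_eq_pair {x a b d : V} {c : G.Walk x x} (hc : c.IsCycle)
    (hbd : b ≠ d) (hb : s(a, b) ∈ c.edges) (hd : s(a, d) ∈ c.edges) :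
    c.toSubgraph.neighborSet a = {b, d} := by
  have hcard := hc.ncard_neighborSet_toSubgraph_eq_two (c.fst_mem_support_of_mem_edges hb)
  symm
  refine Set.eq_of_subset_of_ncard_le ?_ (by rw [hcard, Set.ncard_pair hbd])
    (Set.finite_of_ncard_pos (by omega))
  rintro y (rfl | rfl)
  · exact adj_toSubgraph_iff_mem_edges.mpr hb
  · exact adj_toSubgraph_iff_mem_edges.mpr hd

/-- A triangle in a cycle closes it up: its vertices already have both of their cycle neighbours
inside the triangle. -/
lemma length_eq_three_of_triangle {x a b d : V} {c : G.Walk x x} (hc : c.IsCycle)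
    (hab : a ≠ b) (hbd : b ≠ d) (had : a ≠ d) (hab' : s(a, b) ∈ c.edges)
    (hbd' : s(b, d) ∈ c.edges) (had' : s(a, d) ∈ c.edges) : c.length = 3 := by
  classical
  have hba' : s(b, a) ∈ c.edges := Sym2.eq_swap ▸ hab'
  have hdb' : s(d, b) ∈ c.edges := Sym2.eq_swap ▸ hbd'
  have hda' : s(d, a) ∈ c.edges := Sym2.eq_swap ▸ had'
  have hclosed : ∀ v w, s(v, w) ∈ c.edges → v ∈ ({a, b, d} : Finset V) →
      w ∈ ({a, b, d} : Finset V) := by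
    intro v w hvw hv
    have hw : w ∈ c.toSubgraph.neighborSet v := adj_toSubgraph_iff_mem_edges.mpr hvw
    simp only [Finset.mem_insert, Finset.mem_singleton] at hv ⊢
    rcases hv with rfl | rfl | rfl
    · rw [hc.neighborSet_toSubgraph_eq_pair hbd hab' had'] at hw
      simp only [Set.mem_insert_iff, Set.mem_singleton_iff] at hw
      tauto
    · rw [hc.neighborSet_toSubgraph_eq_pair had hba' hbd'] at hw
      simp only [Set.mem_insert_iff, Set.mem_singleton_iff] at hw
      tauto
    · rw [hc.neighborSet_toSubgraph_eq_pair hab hda' hdb'] at hw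
      simp only [Set.mem_insert_iff, Set.mem_singleton_iff] at hw
      tauto
  have hsupp := c.support_subset_of_forall_mem_edges (T := ↑({a, b, d} : Finset V)) hclosed
    (c.fst_mem_support_of_mem_edges hab') (by simp)
  have hle : c.support.tail.toFinset ⊆ {a, b, d} := fun y hy =>
    hsupp y (List.mem_of_mem_tail (List.mem_toFinset.mp hy))
  have := Finset.card_le_card hle
  rw [List.toFinset_card_of_nodup hc.support_nodup, List.length_tail, length_support] at this
  have := Finset.card_le_three (a := a) (b := b) (c := d)
  have := hc.three_le_length
  omega

lemma card_filter_edges_mem_sym2_le_two [DecidableEq V] {x : V} {c : G.Walk x x}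
    (hc : c.IsCycle) (hlen : c.length ≠ 3) {E : Finset V} (hE : E.card = 3) :
    (c.edges.toFinset.filter (· ∈ E.sym2)).card ≤ 2 := by
  by_contra! hcard
  obtain ⟨a, b, d, hab, had, hbd, rfl⟩ := Finset.card_eq_three.mp hE
  have hsub : c.edges.toFinset.filter (· ∈ ({a, b, d} : Finset V).sym2) ⊆
      {s(a, b), s(b, d), s(a, d)} := by
    intro e he
    rw [Finset.mem_filter, List.mem_toFinset] at he
    obtain ⟨hec, heE⟩ := he
    have hdiag : ¬e.IsDiag := G.not_isDiag_of_mem_edgeSet (c.edges_subset_edgeSet hec)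
    induction e with
    | _ p q =>
      rw [Finset.mk_mem_sym2_iff] at heE
      simp only [Sym2.mk_isDiag_iff] at hdiag
      simp only [Finset.mem_insert, Finset.mem_singleton, Sym2.eq_iff] at heE ⊢
      rcases heE with ⟨rfl | rfl | rfl, rfl | rfl | rfl⟩ <;> tauto
  have htri := Finset.eq_of_subset_of_card_le hsub (Finset.card_le_three.trans hcard)
  have hmem : ∀ e ∈ ({s(a, b), s(b, d), s(a, d)} : Finset (Sym2 V)), e ∈ c.edges := by
    intro e he
    rw [← htri, Finset.mem_filter, List.mem_toFinset] at he
    exact he.1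
  exact hlen (hc.length_eq_three_of_triangle hab hbd had
    (hmem _ (by simp)) (hmem _ (by simp)) (hmem _ (by simp)))

end IsCycle

end SimpleGraph.Walk

/-- Hall condition: if every edge of a cycle `c` of length `ℓ ≥ 4` lies in at least two
hyperedges of the 3-uniform hypergraph `H`, then every set `S` of `i ≥ 1` edges of the
cycle meets at least `i` hyperedges. -/
theorem stmt6 {V : Type*} [DecidableEq V] (G : SimpleGraph V) (ℓ : ℕ) (hℓ : 4 ≤ ℓ)
    (x : V) (c : G.Walk x x) (hc : c.IsCycle) (hlen : c.length = ℓ)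
    (H : Finset (Finset V)) (h3 : ∀ E ∈ H, E.card = 3)
    (hcov : ∀ e ∈ c.edges, 2 ≤ (H.filter fun E => e ∈ E.sym2).card) :
    ∀ S ⊆ c.edges.toFinset, 1 ≤ S.card →
      S.card ≤ (H.filter fun E => ∃ e ∈ S, e ∈ E.sym2).card := by
  intro S hS _
  set T := H.filter fun E => ∃ e ∈ S, e ∈ E.sym2
  have habove : ∀ e ∈ S, 2 ≤ (T.bipartiteAbove (fun e E => e ∈ E.sym2) e).card := by
    intro e he
    refine (hcov e (List.mem_toFinset.mp (hS he))).trans (Finset.card_le_card fun E hE => ?_)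
    rw [Finset.mem_filter] at hE
    exact Finset.mem_filter.mpr ⟨Finset.mem_filter.mpr ⟨hE.1, e, he, hE.2⟩, hE.2⟩
  have hbelow : ∀ E ∈ T, (S.bipartiteBelow (fun e E => e ∈ E.sym2) E).card ≤ 2 := fun E hE =>
    (Finset.card_le_card (Finset.filter_subset_filter _ hS)).trans
      (hc.card_filter_edges_mem_sym2_le_two (by omega) (h3 E (Finset.mem_of_mem_filter E hE)))
  have := Finset.card_mul_le_card_mul _ habove hbelow
  omega
end

section
/- Let F be a theta graph (a cycle with a chord) of order ℓ, and let t be an odd integer with 1 ≤ t < ℓ. Suppose A ∪ B is a partition of the vertices of F with A nonempty such that every path of length t in F starting in A ends in A. Then A = V(F). -/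
/-- `F` is a theta graph of order `ℓ`: a (spanning) cycle on `ℓ` vertices together with a
single chord. -/
def IsThetaGraph {V : Type*} (F : SimpleGraph V) (ℓ : ℕ) : Prop :=
  ∃ (x : V) (c : F.Walk x x) (a b : V),
    c.IsCycle ∧ c.length = ℓ ∧ (∀ v, v ∈ c.support) ∧
    F.Adj a b ∧ s(a, b) ∉ c.edges ∧
    (∀ e, e ∈ F.edgeSet ↔ e ∈ c.edges ∨ e = s(a, b))

/-!
Label the spanning cycle by an `ℓ`-periodic map `f : ℤ → V`, so that the chord joins `f 0` and `f d` with `2 ≤ d ≤ ℓ / 2`, and consider the set of `n` with `f n ∈ A`.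
Arcs of the cycle show that it has period `t`. A path running along an arc into `f 0`, across
the chord and along an arc back from `f d` towards `f 0` shows that the set is symmetric about
`(d - t + 1) / 2` and about `(d + t - 1) / 2`, provided the set has a period `p` small enough
for these paths to start at `p` consecutive positions. The two reflections compose to the
period `2t - 2`, hence `2`, hence `1` as `t` is odd, so `A` is everything.
The period `gcd t ℓ` is small enough unless it exceeds `d`; then paths that leave `f d` away
from `f 0` have room to start anywhere in `t` consecutive positions, giving the period
`d + t - 1`, hence `d - 1`, and `gcd (gcd t ℓ) (d - 1)` is small enough.
-/

open SimpleGraph Function Set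

section

variable {V : Type*} {G : SimpleGraph V}

theorem SimpleGraph.exists_isPath_of_adj {g : ℕ → V} {k : ℕ}
    (hadj : ∀ i < k, G.Adj (g i) (g (i + 1))) (hinj : InjOn g {i | i ≤ k}) :
    ∃ p : G.Walk (g 0) (g k), p.IsPath ∧ p.length = k := by
  set L := (List.range (k + 1)).map g
  have hne : L ≠ [] := by simp [L]
  have hchain : L.IsChain G.Adj := (List.isChain_map g).2 ((List.isChain_range_succ _ _).2 hadj)
  refine ⟨(Walk.ofSupport L hne hchain).copy (by simp [L]) (by simp [L]), ?_, by simp [L]⟩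
  rw [Walk.isPath_copy, Walk.isPath_def, Walk.support_ofSupport]
  refine List.Nodup.map_on (fun i hi j hj h => hinj ?_ ?_ h) List.nodup_range
  · simpa [Nat.lt_succ_iff] using hi
  · simpa [Nat.lt_succ_iff] using hj

def IsClosedUnderPathsOfLength (G : SimpleGraph V) (t : ℕ) (A : Set V) : Prop :=
  ∀ (u v : V) (p : G.Walk u v), p.IsPath → p.length = t → u ∈ A → v ∈ A

theorem IsClosedUnderPathsOfLength.mem_iff {t : ℕ} {A : Set V}
    (hA : IsClosedUnderPathsOfLength G t A) {u v : V} {p : G.Walk u v} (hp : p.IsPath)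
    (hlen : p.length = t) : u ∈ A ↔ v ∈ A :=
  ⟨hA u v p hp hlen, hA v u p.reverse hp.reverse (by rw [Walk.length_reverse, hlen])⟩

theorem Function.Periodic.eq_of_eqOn_Ico {α β : Type*} [AddCommGroup α] [LinearOrder α]
    [IsOrderedAddMonoid α] [Archimedean α] {f g : α → β} {c a : α}
    (hf : Periodic f c) (hg : Periodic g c) (hc : 0 < c) (h : EqOn f g (Ico a (a + c))) :
    f = g := by
  have hfg : Periodic (fun x => f x = g x) c := fun x => by simp only [hf x, hg x]
  funext x
  obtain ⟨y, hy, hxy⟩ := hfg.exists_mem_Ico hc x a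
  exact hxy ▸ h hy

theorem Function.Periodic.gcd {β : Type*} {f : ℤ → β} {a b : ℤ} (ha : Periodic f a)
    (hb : Periodic f b) : Periodic f (Int.gcd a b) := by
  rw [Int.gcd_eq_gcd_ab, mul_comm a, mul_comm b]
  exact (ha.int_mul _).add_period (hb.int_mul _)

structure IsCycleLabeling (G : SimpleGraph V) (ℓ : ℕ) (f : ℤ → V) : Prop where
  eq_iff_modEq : ∀ m n, f m = f n ↔ m ≡ n [ZMOD ℓ]
  adj : ∀ n, G.Adj (f n) (f (n + 1))

namespace IsCycleLabeling

variable {ℓ : ℕ} {f : ℤ → V}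

theorem periodic (hf : IsCycleLabeling G ℓ f) : Periodic f ℓ := fun n =>
  (hf.eq_iff_modEq _ _).2 (by simp [Int.ModEq])

theorem injOn_Ico (hf : IsCycleLabeling G ℓ f) (a : ℤ) : InjOn f (Ico a (a + ℓ)) := by
  rintro m ⟨hm, hm'⟩ n ⟨hn, hn'⟩ h
  have := Int.eq_zero_of_abs_lt_dvd ((hf.eq_iff_modEq m n).1 h).dvd (abs_lt.2 ⟨by omega, by omega⟩)
  omega

theorem adj_of_eq_add_one (hf : IsCycleLabeling G ℓ f) {m n : ℤ} (h : n = m + 1 ∨ m = n + 1) :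
    G.Adj (f m) (f n) := by
  rcases h with rfl | rfl
  exacts [hf.adj m, (hf.adj n).symm]

theorem const_add (hf : IsCycleLabeling G ℓ f) (c : ℤ) :
    IsCycleLabeling G ℓ (fun n => f (c + n)) where
  eq_iff_modEq m n := by
    simp only [hf.eq_iff_modEq, Int.modEq_iff_dvd, add_sub_add_left_eq_sub]
  adj n := add_assoc c n 1 ▸ hf.adj (c + n)

theorem const_sub (hf : IsCycleLabeling G ℓ f) (c : ℤ) :
    IsCycleLabeling G ℓ (fun n => f (c - n)) where
  eq_iff_modEq m n := by
    simp only [hf.eq_iff_modEq, Int.modEq_iff_dvd, sub_sub_sub_cancel_left, dvd_sub_comm]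
  adj n := by simpa [sub_add_eq_sub_sub] using (hf.adj (c - n - 1)).symm

variable {A : Set V} {t d : ℕ}

theorem mem_iff_of_adj (hf : IsCycleLabeling G ℓ f) (hA : IsClosedUnderPathsOfLength G t A)
    {φ : ℕ → ℤ} {a : ℤ} (hadj : ∀ i < t, G.Adj (f (φ i)) (f (φ (i + 1))))
    (hφ : ∀ i ≤ t, φ i ∈ Ico a (a + ℓ)) (hinj : ∀ i ≤ t, ∀ j ≤ t, φ i = φ j → i = j) :
    f (φ 0) ∈ A ↔ f (φ t) ∈ A :=
  have ⟨_, hp, hlen⟩ := exists_isPath_of_adj (g := f ∘ φ) hadj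
    ((hf.injOn_Ico a).comp (fun i hi j hj => hinj i hi j hj) (fun i hi => hφ i hi))
  hA.mem_iff hp hlen

theorem periodic_of_lt (hf : IsCycleLabeling G ℓ f) (hA : IsClosedUnderPathsOfLength G t A)
    (htℓ : t < ℓ) : Periodic (fun n => f n ∈ A) t := fun x => by
  have h := hf.mem_iff_of_adj hA (φ := fun i => x + i) (a := x)
    (fun i _ => hf.adj_of_eq_add_one (by push_cast; omega))
    (fun i hi => by simp only [mem_Ico]; omega) (fun i _ j _ h => by simpa using h)
  simpa using propext h.symm

/-- The path `f (-s), …, f 0, f d, …, f (d + u)`. -/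
theorem mem_iff_of_parallel (hf : IsCycleLabeling G ℓ f) (hA : IsClosedUnderPathsOfLength G t A)
    (hchord : G.Adj (f 0) (f d)) {s u : ℕ} (hsu : s + u + 1 = t) (hd : 0 < d)
    (hℓ : s + d + u < ℓ) : f (-s) ∈ A ↔ f (d + u) ∈ A := by
  let φ : ℕ → ℤ := fun i => if i ≤ s then i - s else d + (i - s - 1)
  have hadj : ∀ i < t, G.Adj (f (φ i)) (f (φ (i + 1))) := by
    intro i hi
    by_cases his : i = s
    · subst his
      convert hchord using 2 <;> simp [φ]
    · exact hf.adj_of_eq_add_one (by simp only [φ]; split_ifs <;> omega)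
  have h := hf.mem_iff_of_adj hA hadj (a := -s)
    (fun i hi => by simp only [φ, mem_Ico]; split_ifs <;> omega)
    (fun i hi j hj h => by simp only [φ] at h; split_ifs at h <;> omega)
  rwa [show φ 0 = -s by simp [φ], show φ t = d + u by simp [φ]; omega] at h

/-- The path `f (-s), …, f 0, f d, …, f (d - u)`. -/
theorem mem_iff_of_crossed (hf : IsCycleLabeling G ℓ f) (hA : IsClosedUnderPathsOfLength G t A)
    (hchord : G.Adj (f 0) (f d)) {s u : ℕ} (hsu : s + u + 1 = t) (hu : u < d)
    (hℓ : s + d < ℓ) : f (-s) ∈ A ↔ f (d - u) ∈ A := by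
  let φ : ℕ → ℤ := fun i => if i ≤ s then i - s else d - (i - s - 1)
  have hadj : ∀ i < t, G.Adj (f (φ i)) (f (φ (i + 1))) := by
    intro i hi
    by_cases his : i = s
    · subst his
      convert hchord using 2 <;> simp [φ]
    · exact hf.adj_of_eq_add_one (by simp only [φ]; split_ifs <;> omega)
  have h := hf.mem_iff_of_adj hA hadj (a := -s)
    (fun i hi => by simp only [φ, mem_Ico]; split_ifs <;> omega)
    (fun i hi j hj h => by simp only [φ] at h; split_ifs at h <;> omega)
  rwa [show φ 0 = -s by simp [φ], show φ t = d - u by simp [φ]; omega] at h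

theorem periodic_of_parallel (hf : IsCycleLabeling G ℓ f) (hA : IsClosedUnderPathsOfLength G t A)
    (hchord : G.Adj (f 0) (f d)) (hd : 0 < d) (hdt : d + t ≤ ℓ) {p : ℕ}
    (hp : Periodic (fun n => f n ∈ A) p) (hp0 : 0 < p) (hpt : p ≤ t) :
    Periodic (fun n => f n ∈ A) (d + t - 1) := by
  have h := hp.eq_of_eqOn_Ico (hp.add_const (d + t - 1)) (by omega) (a := 1 - (t : ℤ)) ?_
  · exact fun x => (congrFun h x).symm
  rintro x ⟨hx, hx'⟩
  obtain ⟨s, rfl⟩ : ∃ s : ℕ, x = -s := ⟨(-x).toNat, by omega⟩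
  have := hf.mem_iff_of_parallel hA hchord (s := s) (u := t - 1 - s) (by omega) hd (by omega)
  dsimp only
  rw [show (-s : ℤ) + (d + t - 1) = d + ((t - 1 - s : ℕ) : ℤ) by omega]
  exact propext this

theorem mem_iff_mem_sub_of_crossed (hf : IsCycleLabeling G ℓ f)
    (hA : IsClosedUnderPathsOfLength G t A) (hchord : G.Adj (f 0) (f d)) {p : ℕ}
    (hp : Periodic (fun n => f n ∈ A) p) (hp0 : 0 < p) (hpt : p ≤ t) (hpd : p ≤ d)
    (hptℓ : p + t ≤ ℓ) (hpdℓ : p + d ≤ ℓ) (n : ℤ) : f n ∈ A ↔ f (d - t + 1 - n) ∈ A := by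
  have h := hp.eq_of_eqOn_Ico (hp.const_sub (d - t + 1)) (by omega)
    (a := max (1 - (t : ℤ)) (d + 1 - ℓ)) ?_
  · exact (congrFun h n).to_iff
  rintro x ⟨hx, hx'⟩
  obtain ⟨s, rfl⟩ : ∃ s : ℕ, x = -s := ⟨(-x).toNat, by omega⟩
  have := hf.mem_iff_of_crossed hA hchord (s := s) (u := t - 1 - s) (by omega) (by omega)
    (by omega)
  dsimp only
  rw [show (d - t + 1 - -s : ℤ) = d - ((t - 1 - s : ℕ) : ℤ) by omega]
  exact propext this

theorem mem_iff_mem_sub_of_crossed' (hf : IsCycleLabeling G ℓ f)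
    (hA : IsClosedUnderPathsOfLength G t A) (hchord : G.Adj (f 0) (f d)) {p : ℕ}
    (hp : Periodic (fun n => f n ∈ A) p) (hp0 : 0 < p) (hpt : p ≤ t) (hpd : p ≤ d)
    (hptℓ : p + t ≤ ℓ) (hpdℓ : p + d ≤ ℓ) (n : ℤ) : f n ∈ A ↔ f (d + t - 1 - n) ∈ A := by
  have h := (hf.const_sub d).mem_iff_mem_sub_of_crossed hA (by simpa using hchord.symm)
    (hp.const_sub d) hp0 hpt hpd hptℓ hpdℓ (d - n)
  rwa [sub_sub_cancel, show (d - (d - t + 1 - (d - n)) : ℤ) = d + t - 1 - n by ring] at h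

theorem periodic_two (hf : IsCycleLabeling G ℓ f)
    (hA : IsClosedUnderPathsOfLength G t A) (hchord : G.Adj (f 0) (f d)) (htℓ : t < ℓ) {p : ℕ}
    (hp : Periodic (fun n => f n ∈ A) p) (hp0 : 0 < p) (hpt : p ≤ t) (hpd : p ≤ d)
    (hptℓ : p + t ≤ ℓ) (hpdℓ : p + d ≤ ℓ) : Periodic (fun n => f n ∈ A) 2 := by
  have ht := hf.periodic_of_lt hA htℓ
  have h2t : Periodic (fun n => f n ∈ A) (2 * t - 2) := fun n => by
    have h := hf.mem_iff_mem_sub_of_crossed' hA hchord hp hp0 hpt hpd hptℓ hpdℓ (d - t + 1 - n)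
    rw [show (d + t - 1 - (d - t + 1 - n) : ℤ) = n + (2 * t - 2) by ring] at h
    exact propext (h.symm.trans (hf.mem_iff_mem_sub_of_crossed hA hchord hp hp0 hpt hpd hptℓ
      hpdℓ n).symm)
  rw [show (2 : ℤ) = t + t - (2 * t - 2) by ring]
  exact (ht.add_period ht).sub_period h2t

theorem exists_small_period (hf : IsCycleLabeling G ℓ f)
    (hA : IsClosedUnderPathsOfLength G t A) (hchord : G.Adj (f 0) (f d)) (hd : 2 ≤ d)
    (hdℓ : 2 * d ≤ ℓ) (ht : 0 < t) (htℓ : t < ℓ) :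
    ∃ p : ℕ, Periodic (fun n => f n ∈ A) p ∧ 0 < p ∧ p ≤ t ∧ p ≤ d ∧ p + t ≤ ℓ ∧ p + d ≤ ℓ := by
  have hPt := hf.periodic_of_lt hA htℓ
  have hPg : Periodic (fun n => f n ∈ A) (t.gcd ℓ) := by
    simpa using hPt.gcd (hf.periodic.comp _)
  have hg0 : 0 < t.gcd ℓ := Nat.gcd_pos_of_pos_left _ ht
  have hgt : t.gcd ℓ ≤ t := Nat.le_of_dvd ht (Nat.gcd_dvd_left _ _)
  have hgℓ : t.gcd ℓ + t ≤ ℓ := by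
    have := Nat.le_of_dvd (by omega) (Nat.dvd_sub (Nat.gcd_dvd_right t ℓ) (Nat.gcd_dvd_left t ℓ))
    omega
  by_cases hgd : t.gcd ℓ ≤ d
  · exact ⟨_, hPg, hg0, hgt, hgd, hgℓ, by omega⟩
  have hPd : Periodic (fun n => f n ∈ A) ((d - 1 : ℕ) : ℤ) := by
    have := (hf.periodic_of_parallel hA hchord (by omega) (by omega) hPg hg0 hgt).sub_period hPt
    rwa [show (d + t - 1 - t : ℤ) = ((d - 1 : ℕ) : ℤ) by omega] at this
  have hg'd : (t.gcd ℓ).gcd (d - 1) ≤ d - 1 := Nat.le_of_dvd (by omega) (Nat.gcd_dvd_right _ _)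
  have hg'g : (t.gcd ℓ).gcd (d - 1) ≤ t.gcd ℓ := Nat.le_of_dvd hg0 (Nat.gcd_dvd_left _ _)
  exact ⟨_, by simpa using hPg.gcd hPd, Nat.gcd_pos_of_pos_left _ hg0, by omega, by omega,
    by omega, by omega⟩

theorem periodic_one (hf : IsCycleLabeling G ℓ f)
    (hA : IsClosedUnderPathsOfLength G t A) (hchord : G.Adj (f 0) (f d)) (hd : 2 ≤ d)
    (hdℓ : 2 * d ≤ ℓ) (htℓ : t < ℓ) (hodd : Odd t) : Periodic (fun n => f n ∈ A) 1 := by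
  obtain ⟨p, hp, hp0, hpt, hpd, hptℓ, hpdℓ⟩ :=
    hf.exists_small_period hA hchord hd hdℓ hodd.pos htℓ
  have h2 := hf.periodic_two hA hchord htℓ hp hp0 hpt hpd hptℓ hpdℓ
  obtain ⟨k, rfl⟩ := hodd
  rw [show (1 : ℤ) = ((2 * k + 1 : ℕ) : ℤ) - k * 2 by push_cast; ring]
  exact (hf.periodic_of_lt hA htℓ).sub_period (h2.nat_mul k)

end IsCycleLabeling

theorem SimpleGraph.Walk.IsCycle.exists_isCycleLabeling {x : V} {c : G.Walk x x}
    (hc : c.IsCycle) : ∃ f : ℤ → V, IsCycleLabeling G c.length f ∧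
      (∀ v ∈ c.support, ∃ n, f n = v) ∧ ∀ n, s(f n, f (n + 1)) ∈ c.edges := by
  have hℓ : (0 : ℤ) < c.length := by have := hc.three_le_length; omega
  have hmod (n : ℤ) : 0 ≤ n % c.length ∧ n % c.length < c.length :=
    ⟨Int.emod_nonneg n hℓ.ne', Int.emod_lt_of_pos n hℓ⟩
  let f : ℤ → V := fun n => c.getVert (n % c.length).toNat
  have hf_natCast : ∀ i ≤ c.length, f i = c.getVert i := by
    intro i hi
    rcases hi.lt_or_eq with hi | rfl
    · simp [f, Int.emod_eq_of_lt, hi]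
    · simp [f, Walk.getVert_length]
  have hf_eq : ∀ m n, f m = f n ↔ m ≡ n [ZMOD c.length] := by
    refine fun m n => ⟨fun h => ?_, fun h => by simp only [f, Int.ModEq.eq h]⟩
    have := hmod m
    have := hmod n
    have := hc.getVert_injOn' (by simp only [mem_ofPred_eq]; omega)
      (by simp only [mem_ofPred_eq]; omega) h
    unfold Int.ModEq
    omega
  have hedge : ∀ n, s(f n, f (n + 1)) ∈ c.edges := fun n => by
    have := hmod n
    have hsucc : f (n + 1) = c.getVert ((n % c.length).toNat + 1) := by
      rw [← hf_natCast _ (by omega), hf_eq]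
      push_cast
      rw [Int.toNat_of_nonneg (hmod n).1]
      exact (Int.mod_modEq n _).symm.add_right 1
    rw [hsucc, Walk.mk_mem_edges_iff_exists]
    exact ⟨_, by omega, rfl⟩
  refine ⟨f, ⟨hf_eq, fun n => c.adj_of_mem_edges (hedge n)⟩, fun v hv => ?_, hedge⟩
  obtain ⟨i, rfl, hi⟩ := Walk.mem_support_iff_exists_getVert.1 hv
  exact ⟨i, hf_natCast i hi⟩

theorem IsThetaGraph.exists_isCycleLabeling {ℓ : ℕ} (hF : IsThetaGraph G ℓ) :
    ∃ (f : ℤ → V) (d : ℕ), IsCycleLabeling G ℓ f ∧ Surjective f ∧ G.Adj (f 0) (f d) ∧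
      2 ≤ d ∧ 2 * d ≤ ℓ := by
  obtain ⟨x, c, a, b, hc, rfl, hsupp, hab, hchord, -⟩ := hF
  obtain ⟨f, hf, hsurj, hedge⟩ := hc.exists_isCycleLabeling
  obtain ⟨m, rfl⟩ := hsurj a (hsupp a)
  obtain ⟨n, rfl⟩ := hsurj b (hsupp b)
  have hℓ : (0 : ℤ) < c.length := by have := hc.three_le_length; omega
  obtain ⟨e, he, hn⟩ : ∃ e : ℕ, e < c.length ∧ f n = f (m + e) := by
    have := Int.emod_nonneg (n - m) hℓ.ne'
    refine ⟨((n - m) % c.length).toNat, by have := Int.emod_lt_of_pos (n - m) hℓ; omega,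
      (hf.eq_iff_modEq _ _).2 (Int.modEq_iff_dvd.2 ⟨-((n - m) / c.length), ?_⟩)⟩
    rw [Int.toNat_of_nonneg this, Int.emod_def]
    ring
  rw [hn] at hab hchord
  have hedge' : ∀ k, s(f (m + k), f (m + (k + 1))) ∈ c.edges := fun k => by
    simpa only [add_assoc] using hedge (m + k)
  have he2 : 2 ≤ e := by
    by_contra! h
    interval_cases e
    · exact hab.ne (by simp)
    · exact hchord (by simpa using hedge' 0)
  have he2' : e + 2 ≤ c.length := by
    by_contra! h
    have : f (m + (e + 1)) = f m := by
      simpa using (hf.eq_iff_modEq _ _).2 (Int.modEq_iff_dvd.2 ⟨-1, by omega⟩)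
    exact hchord (by simpa [this, Sym2.eq_swap] using hedge' e)
  by_cases h : 2 * e ≤ c.length
  · exact ⟨_, e, hf.const_add m,
      fun v => let ⟨k, hk⟩ := hsurj v (hsupp v); ⟨k - m, by simpa using hk⟩,
      by simpa using hab, he2, h⟩
  · refine ⟨_, c.length - e, hf.const_sub m, ?_, ?_, by omega, by omega⟩
    · exact fun v => let ⟨k, hk⟩ := hsurj v (hsupp v); ⟨m - k, by simpa using hk⟩
    · have : f (m - (c.length - e : ℕ)) = f (m + e) :=
        (hf.eq_iff_modEq _ _).2 (Int.modEq_iff_dvd.2 ⟨1, by omega⟩)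
      simpa [this] using hab

end

theorem stmt7_general {V : Type*} (F : SimpleGraph V) (ℓ t : ℕ)
    (hF : IsThetaGraph F ℓ) (ht2 : t < ℓ) (hodd : Odd t)
    (A : Set V) (hA : A.Nonempty)
    (hpath : ∀ (u v : V) (p : F.Walk u v), p.IsPath → p.length = t → u ∈ A → v ∈ A) :
    A = Set.univ := by
  obtain ⟨f, d, hf, hsurj, hchord, hd, hdℓ⟩ := hF.exists_isCycleLabeling
  have h1 := hf.periodic_one hpath hchord hd hdℓ ht2 hodd
  obtain ⟨a, ha⟩ := hA
  obtain ⟨m, rfl⟩ := hsurj a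
  refine eq_univ_of_forall fun v => ?_
  obtain ⟨n, rfl⟩ := hsurj v
  simpa using (h1.int_mul (n - m) m).to_iff.2 ha

/-- If `F` is a theta graph of order `ℓ`, `t` is odd with `1 ≤ t < ℓ`, `A` is a nonempty
vertex set such that every path of length `t` starting in `A` ends in `A`,
then `A` is the whole vertex set. -/
theorem stmt7 {V : Type*} (F : SimpleGraph V) (ℓ t : ℕ)
    (hF : IsThetaGraph F ℓ) (ht1 : 1 ≤ t) (ht2 : t < ℓ) (hodd : Odd t)
    (A : Set V) (hA : A.Nonempty)
    (hpath : ∀ (u v : V) (p : F.Walk u v), p.IsPath → p.length = t → u ∈ A → v ∈ A) :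
    A = Set.univ :=
  stmt7_general F ℓ t hF ht2 hodd A hA hpath
end

section
/- If a graph G on n vertices contains no theta graph of order at least ℓ (ℓ ≥ 4) as a subgraph, then G has at most (ℓ-2)n edges. -/
/-- `G` contains a theta graph of order `m`: a cycle on `m` vertices plus a chord. -/
def HasThetaOfOrder {V : Type*} (G : SimpleGraph V) (m : ℕ) : Prop :=
  ∃ (x : V) (c : G.Walk x x) (a b : V),
    c.IsCycle ∧ c.length = m ∧ a ∈ c.support ∧ b ∈ c.support ∧
    G.Adj a b ∧ s(a, b) ∉ c.edges

/-!
Deleting a vertex of degree at most `ℓ - 2` keeps the graph theta-free and loses at most `ℓ - 2`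
edges, so by induction it suffices to see that a graph whose non-isolated vertices all have
degree at least `ℓ - 1 ≥ 3` contains a theta graph of order at least `ℓ`, unless it has no edges.
Take a longest path `p` ending at a fixed non-isolated vertex. Its first vertex `u` has all its
neighbours on `p`; closing `p` at the last of them, `y`, gives a cycle of length at least
`deg u + 1 ≥ ℓ`, and a neighbour of `u` other than `y` and the second vertex of `p` is a chord.
-/

open Finset SimpleGraph SimpleGraph.Walk

theorem HasThetaOfOrder.mono {V : Type*} {G H : SimpleGraph V} {m : ℕ} (hGH : G ≤ H)
    (h : HasThetaOfOrder G m) : HasThetaOfOrder H m := by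
  obtain ⟨x, c, a, b, hc, hlen, ha, hb, hab, hch⟩ := h
  exact ⟨x, c.mapLe hGH, a, b, isCycle_mapLe hGH |>.mpr hc, by rwa [length_mapLe],
    by rwa [support_mapLe_eq_support], by rwa [support_mapLe_eq_support], hGH hab,
    by rwa [edges_mapLe_eq_edges]⟩

namespace SimpleGraph

variable {V : Type*} {G : SimpleGraph V}

namespace Walk

theorem exists_forall_mem_support_takeUntil [DecidableEq V] {u v : V} (p : G.Walk u v)
    {s : Finset V} (hs : s.Nonempty) (hsp : ∀ w ∈ s, w ∈ p.support) :
    ∃ y ∈ s, ∃ hy : y ∈ p.support, ∀ w ∈ s, w ∈ (p.takeUntil y hy).support := by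
  -- `y` is the vertex of `s` that comes last on `p`
  obtain ⟨y, hys, hmax⟩ := s.exists_max_image p.support.idxOf hs
  refine ⟨y, hys, hsp y hys, fun w hw => ?_⟩
  have hle : p.support.idxOf w ≤ (p.takeUntil y (hsp y hys)).length :=
    p.length_takeUntil (hsp y hys) ▸ hmax w hw
  rw [← p.getVert_support_idxOf (hsp w hw), ← getVert_takeUntil _ hle]
  exact getVert_mem_support _ _

theorem exists_isPath_forall_adj_mem_support [Finite V] (v : V) :
    ∃ u, ∃ p : G.Walk u v, p.IsPath ∧ ∀ w, G.Adj u w → w ∈ p.support := by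
  classical
  have := Fintype.ofFinite V
  have : Nonempty (Σ u, G.Path u v) := ⟨⟨v, Path.nil⟩⟩
  obtain ⟨⟨u, p, hp⟩, hmax⟩ := Finite.exists_max fun p : Σ u, G.Path u v => p.2.1.length
  refine ⟨u, p, hp, fun w hw => by_contra fun hwp => ?_⟩
  have := hmax ⟨w, cons hw.symm p, (cons_isPath_iff _ _).mpr ⟨hp, hwp⟩⟩
  simp at this

end Walk

theorem exists_hasThetaOfOrder_of_isPath [DecidableEq V] {u v : V} {p : G.Walk u v}
    (hp : p.IsPath) {s : Finset V} (hsu : ∀ w ∈ s, G.Adj u w) (hsp : ∀ w ∈ s, w ∈ p.support)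
    (hs : 3 ≤ #s) : ∃ m, #s + 1 ≤ m ∧ HasThetaOfOrder G m := by
  obtain ⟨y, hys, hy, hsq⟩ := p.exists_forall_mem_support_takeUntil (card_pos.mp (by omega)) hsp
  set q := p.takeUntil y hy
  have hq : q.IsPath := hp.takeUntil hy
  have hlen : #s + 1 ≤ q.length + 1 := by
    rw [← length_support, ← List.toFinset_card_of_nodup hq.support_nodup,
      ← card_insert_of_notMem fun hu => (hsu u hu).ne rfl]
    exact card_le_card (insert_subset (by simp) fun w hw => List.mem_toFinset.mpr (hsq w hw))
  have hyu : s(y, u) ∉ q.edges := fun h => by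
    have := hq.length_eq_one_of_mem_edges (Sym2.eq_swap ▸ h)
    omega
  obtain ⟨b, hbs, hby, hbq⟩ : ∃ b ∈ s, b ≠ y ∧ b ≠ q.snd := by
    by_contra! h
    have hsub : s ⊆ {y, q.snd} := fun b hb => by
      by_cases hby : b = y
      · simp [hby]
      · simp [h b hb hby]
    have := (card_le_card hsub).trans (card_insert_le _ _)
    simp only [card_singleton] at this
    omega
  have huy : u ≠ y := (hsu y hys).ne
  -- the cycle is `q` closed up by the edge `yu`, and `ub` is a chord of it
  refine ⟨q.length + 1, hlen, y, cons (hsu y hys).symm q, u, b,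
    (cons_isCycle_iff q _).mpr ⟨hq, hyu⟩, rfl, by simp, by simp [hsq b hbs], hsu b hbs, ?_⟩
  rw [edges_cons, List.mem_cons, Sym2.eq_iff]
  rintro ((⟨huy', -⟩ | ⟨-, rfl⟩) | h)
  · exact huy huy'
  · exact hby rfl
  · exact hbq (hq.eq_snd_of_mem_edges h)

theorem exists_hasThetaOfOrder_of_le_degree [Fintype V] [DecidableRel G.Adj] {k : ℕ}
    (hk : 3 ≤ k) {v : V} (hv : v ∈ G.support) (hdeg : ∀ w ∈ G.support, k ≤ G.degree w) :
    ∃ m, k + 1 ≤ m ∧ HasThetaOfOrder G m := by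
  classical
  obtain ⟨u, p, hp, hnbr⟩ := exists_isPath_forall_adj_mem_support (G := G) v
  have hu : u ∈ G.support := by
    by_cases hnil : p.Nil
    · exact hnil.eq ▸ hv
    · exact (adj_snd hnil).mem_support_left
  have hku := hdeg u hu
  obtain ⟨m, hm, hθ⟩ := exists_hasThetaOfOrder_of_isPath hp (s := G.neighborFinset u)
    (by simp) (by simpa using hnbr) (by rw [card_neighborFinset_eq_degree]; omega)
  exact ⟨m, by rw [card_neighborFinset_eq_degree] at hm; omega, hθ⟩

variable (G) in
theorem card_edgeFinset_le_mul_card_support [Fintype V] [DecidableEq V] [DecidableRel G.Adj]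
    (k : ℕ)
    (h : ∀ H ≤ G, ∀ [DecidableRel H.Adj], H.support.Nonempty → ∃ v ∈ H.support, H.degree v ≤ k) :
    #G.edgeFinset ≤ k * Fintype.card G.support := by
  induction hn : #G.edgeFinset using Nat.strong_induction_on generalizing G with
  | _ n ih =>
  obtain hempty | hne := G.support.eq_empty_or_nonempty
  · simp [← hn, edgeFinset_eq_empty.mpr (G.support_eq_bot_iff.mp hempty)]
  obtain ⟨v, hv, hdeg⟩ := h G le_rfl hne
  have hpos : 0 < G.degree v := (G.degree_pos_iff_mem_support v).mpr hv
  have hle : G.degree v ≤ n := hn ▸ G.degree_le_card_edgeFinset v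
  have hcard : #(G.deleteIncidenceSet v).edgeFinset = n - G.degree v :=
    hn ▸ card_edgeFinset_deleteIncidenceSet G v
  have ih' := ih _ (by omega) (G.deleteIncidenceSet v)
    (fun H hH _ => h H (hH.trans (deleteIncidenceSet_le G v))) hcard
  have hsupp := card_support_deleteIncidenceSet G hv
  have hc : 1 ≤ Fintype.card G.support := Fintype.card_pos_iff.mpr ⟨⟨v, hv⟩⟩
  calc n = (n - G.degree v) + G.degree v := by omega
    _ ≤ k * (Fintype.card G.support - 1) + k :=
      add_le_add (ih'.trans (Nat.mul_le_mul_left _ hsupp)) hdeg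
    _ = k * Fintype.card G.support := by
      rw [Nat.mul_sub_one, Nat.sub_add_cancel (Nat.le_mul_of_pos_right k hc)]

end SimpleGraph

/-- If an `n`-vertex graph `G` contains no theta graph of order at least `ℓ` (`ℓ ≥ 4`),
then `G` has at most `(ℓ-2)·n` edges. -/
theorem stmt8 {V : Type*} [Fintype V] (G : SimpleGraph V) (ℓ : ℕ) (hℓ : 4 ≤ ℓ)
    (h : ∀ m, ℓ ≤ m → ¬ HasThetaOfOrder G m) :
    G.edgeSet.ncard ≤ (ℓ - 2) * Fintype.card V := by
  classical
  rw [← coe_edgeFinset, Set.ncard_coe_finset]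
  refine (card_edgeFinset_le_mul_card_support G (ℓ - 2) fun H hHG _ hH => ?_).trans
    (Nat.mul_le_mul_left _ (Fintype.card_subtype_le _))
  by_contra! hdeg
  obtain ⟨m, hm, hθ⟩ := exists_hasThetaOfOrder_of_le_degree (k := ℓ - 1) (by omega)
    hH.some_mem fun w hw => by have := hdeg w hw; omega
  exact h m (by omega) (hθ.mono hHG)
end

section
/- Let G be a C_{2k+1}-free graph (k ≥ 2) with a vertex tripartition V₁ ∪ V₂ ∪ V₃ such that every edge of the subgraph G' lies in a triangle of G having one vertex in each part. Then each bipartite subgraph of G' induced between two of the parts contains no cycle of length 2k. -/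
/-- The bipartite subgraph of `G'` induced between the parts `A` and `B`. -/
def bipBetween {V : Type*} (G' : SimpleGraph V) (A B : Finset V) : SimpleGraph V where
  Adj u v := G'.Adj u v ∧ ((u ∈ A ∧ v ∈ B) ∨ (u ∈ B ∧ v ∈ A))
  symm := ⟨by
    rintro u v ⟨h1, h2⟩
    exact ⟨h1.symm, by tauto⟩⟩
  loopless := ⟨fun v h => G'.ne_of_adj h.1 rfl⟩

open SimpleGraph Walk

theorem SimpleGraph.Walk.IsPath.isCycle_cons_cons {V : Type*} {G : SimpleGraph V} {v w x : V}
    {p : G.Walk x v} (hp : p.IsPath) (hw : w ∉ p.support) (hvx : v ≠ x)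
    (hvw : G.Adj v w) (hwx : G.Adj w x) : (cons hvw (cons hwx p)).IsCycle := by
  refine (cons_isCycle_iff _ hvw).2 ⟨(cons_isPath_iff hwx p).2 ⟨hp, hw⟩, ?_⟩
  rw [edges_cons, List.mem_cons, not_or]
  refine ⟨fun he => ?_, fun he => hw (p.snd_mem_support_of_mem_edges he)⟩
  rcases Sym2.eq_iff.1 he with ⟨hvw', -⟩ | ⟨hvx', -⟩
  · exact hvw.ne hvw'
  · exact hvx hvx'

/-- Replacing an edge `vx` of an `ℓ`-cycle of `H` by the path `v w x` gives an `(ℓ + 1)`-cycle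
of `G`, as `w` lies off every edge of `H` and so off the cycle. -/
theorem CycleFree.of_succ_of_common_adj {V : Type*} {G H : SimpleGraph V} {ℓ : ℕ}
    (hfree : CycleFree G (ℓ + 1)) (hle : H ≤ G)
    (hext : ∀ u v, H.Adj u v → ∃ w ∉ H.support, G.Adj u w ∧ G.Adj v w) :
    CycleFree H ℓ := by
  rintro v (_ | ⟨h, p⟩) hc hlen
  · exact not_isCycle_nil hc
  obtain ⟨hp, -⟩ := (cons_isCycle_iff p h).1 hc
  obtain ⟨w, hwH, hvw, hxw⟩ := hext _ _ h
  have hw : w ∉ p.support := fun hw =>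
    hwH (mem_support_of_mem_walk_support p (not_nil_of_isCycle_cons hc) hw)
  refine hfree v _ ((hp.mapLe hle).isCycle_cons_cons ?_ h.ne hvw hxw.symm) ?_
  · rwa [support_mapLe_eq_support]
  · simp only [length_cons, length_mapLe] at hlen ⊢
    omega

theorem bipBetween_le {V : Type*} (G' : SimpleGraph V) (A B : Finset V) :
    bipBetween G' A B ≤ G' := fun _ _ h => h.1

theorem support_bipBetween_subset {V : Type*} [DecidableEq V] (G' : SimpleGraph V)
    (A B : Finset V) : (bipBetween G' A B).support ⊆ ↑(A ∪ B) := by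
  rintro u ⟨v, -, huv⟩
  rw [Finset.coe_union]
  rcases huv with ⟨hu, -⟩ | ⟨hu, -⟩
  · exact Or.inl hu
  · exact Or.inr hu

theorem Finset.mem_of_card_inter_eq_one {α : Type*} [DecidableEq α] {u v w : α} {C : Finset α}
    (h : ({u, v, w} ∩ C : Finset α).card = 1) (hu : u ∉ C) (hv : v ∉ C) : w ∈ C := by
  obtain ⟨y, hy⟩ := Finset.card_pos.1 (h ▸ Nat.one_pos)
  simp only [Finset.mem_inter, Finset.mem_insert, Finset.mem_singleton] at hy
  obtain ⟨rfl | rfl | rfl, hyC⟩ := hy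
  · exact absurd hyC hu
  · exact absurd hyC hv
  · exact hyC

theorem cycleFree_bipBetween {V : Type*} [DecidableEq V] {G G' : SimpleGraph V} {ℓ : ℕ}
    (hfree : CycleFree G (ℓ + 1)) {A B C : Finset V} (hAC : Disjoint A C) (hBC : Disjoint B C)
    (hsub : G' ≤ G)
    (htri : ∀ u v : V, G'.Adj u v → ∃ w : V, G.Adj u w ∧ G.Adj v w ∧
      (({u, v, w} : Finset V) ∩ C).card = 1) :
    CycleFree (bipBetween G' A B) ℓ := by
  have hABC : Disjoint (A ∪ B) C := Finset.disjoint_union_left.2 ⟨hAC, hBC⟩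
  refine hfree.of_succ_of_common_adj ((bipBetween_le G' A B).trans hsub) fun u v huv => ?_
  obtain ⟨w, huw, hvw, hcard⟩ := htri u v huv.1
  have hnot : ∀ {y}, y ∈ (bipBetween G' A B).support → y ∉ C := fun hy =>
    Finset.disjoint_left.1 hABC (support_bipBetween_subset G' A B hy)
  have hwC := Finset.mem_of_card_inter_eq_one hcard (hnot huv.left_mem_support)
    (hnot huv.right_mem_support)
  exact ⟨w, fun hw => hnot hw hwC, huw, hvw⟩

theorem stmt10_general {V : Type*} [DecidableEq V] (G G' : SimpleGraph V) (k : ℕ)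
    (hfree : CycleFree G (2 * k + 1))
    (V₁ V₂ V₃ : Finset V)
    (hd12 : Disjoint V₁ V₂) (hd13 : Disjoint V₁ V₃) (hd23 : Disjoint V₂ V₃)
    (hsub : G' ≤ G)
    (htri : ∀ u v : V, G'.Adj u v → ∃ w : V, G.Adj u w ∧ G.Adj v w ∧
      (({u, v, w} : Finset V) ∩ V₁).card = 1 ∧
      (({u, v, w} : Finset V) ∩ V₂).card = 1 ∧
      (({u, v, w} : Finset V) ∩ V₃).card = 1) :
    CycleFree (bipBetween G' V₁ V₂) (2 * k) ∧
      CycleFree (bipBetween G' V₁ V₃) (2 * k) ∧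
      CycleFree (bipBetween G' V₂ V₃) (2 * k) := by
  refine ⟨?_, ?_, ?_⟩
  · exact cycleFree_bipBetween hfree hd13 hd23 hsub fun u v h => by
      obtain ⟨w, huw, hvw, -, -, h₃⟩ := htri u v h
      exact ⟨w, huw, hvw, h₃⟩
  · exact cycleFree_bipBetween hfree hd12 hd23.symm hsub fun u v h => by
      obtain ⟨w, huw, hvw, -, h₂, -⟩ := htri u v h
      exact ⟨w, huw, hvw, h₂⟩
  · exact cycleFree_bipBetween hfree hd12.symm hd13.symm hsub fun u v h => by
      obtain ⟨w, huw, hvw, h₁, -, -⟩ := htri u v h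
      exact ⟨w, huw, hvw, h₁⟩

/-- If `G` is `C_{2k+1}`-free with a tripartition `V₁ ∪ V₂ ∪ V₃` such that every edge of
`G'` lies in a triangle of `G` having one vertex in each part, then each bipartite
subgraph of `G'` between two of the parts contains no cycle of length `2k`. -/
theorem stmt10 {V : Type*} [DecidableEq V] (G G' : SimpleGraph V) (k : ℕ) (hk : 2 ≤ k)
    (hfree : CycleFree G (2 * k + 1))
    (V₁ V₂ V₃ : Finset V)
    (hcover : ∀ v : V, v ∈ V₁ ∨ v ∈ V₂ ∨ v ∈ V₃)
    (hd12 : Disjoint V₁ V₂) (hd13 : Disjoint V₁ V₃) (hd23 : Disjoint V₂ V₃)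
    (hsub : G' ≤ G)
    (htri : ∀ u v : V, G'.Adj u v → ∃ w : V, G.Adj u w ∧ G.Adj v w ∧
      (({u, v, w} : Finset V) ∩ V₁).card = 1 ∧
      (({u, v, w} : Finset V) ∩ V₂).card = 1 ∧
      (({u, v, w} : Finset V) ∩ V₃).card = 1) :
    CycleFree (bipBetween G' V₁ V₂) (2 * k) ∧
      CycleFree (bipBetween G' V₁ V₃) (2 * k) ∧
      CycleFree (bipBetween G' V₂ V₃) (2 * k) :=
  stmt10_general G G' k hfree V₁ V₂ V₃ hd12 hd13 hd23 hsub htri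
end

section
/- For k ≥ 2, the maximum number of triangles in an n-vertex graph containing no cycle of length 2k+1 is at most 9(k-1)·ex(⌈n/3⌉, ⌈n/3⌉, C_{2k}). -/
/-- `t_ℓ(n)`: the maximum number of triangles of an `n`-vertex graph with no cycle of
length `ℓ`. -/
noncomputable def triMax (n ℓ : ℕ) : ℕ :=
  sSup {m | ∃ G : SimpleGraph (Fin n), CycleFree G ℓ ∧ (G.cliqueSet 3).ncard = m}

/-- `ex(m, n, C_ℓ)`: the maximum number of edges of a bipartite graph with parts of
sizes `m` and `n` containing no cycle of length `ℓ`. -/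
noncomputable def exBipCycle (m n ℓ : ℕ) : ℕ :=
  sSup {e | ∃ G : SimpleGraph (Fin m ⊕ Fin n),
    (∀ u v, G.Adj u v → u.isLeft ≠ v.isLeft) ∧ CycleFree G ℓ ∧ G.edgeSet.ncard = e}

/-!
Relabelling the balanced colouring by residues mod `3` with a random permutation makes a fixed
triangle rainbow with probability `6 m₀ m₁ m₂ / (n (n - 1) (n - 2)) ≥ 2 / 9`, where the `mᵢ` are
the class sizes; so some colouring with classes of size at most `⌈n / 3⌉` has at least `2 / 9` of
all triangles rainbow.

Count a rainbow triangle at its vertex `a` of colour `0`. Its other two vertices span an edge of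
the link of `a` between colours `1` and `2`. This bipartite link has no path with `2k` vertices,
which would close a `(2k+1)`-cycle through `a`, so it has at most `k - 1` edges per non-isolated
vertex `b`; and every such `b` makes `ab` an edge between classes `0` and `1` (or `0` and `2`)
lying in a rainbow triangle. The edges between two classes lying in a rainbow triangle form a
bipartite graph without `2k`-cycles: replacing one edge `xy` of such a cycle by `x z y`, where `z`
is the third vertex of the rainbow triangle, would give a `(2k+1)`-cycle. Hence
`2 t / 9 ≤ 2 (k - 1) ex(⌈n/3⌉, ⌈n/3⌉, C_{2k})`.

Below, `k` is shifted down by one: the forbidden cycle is `C_{2k+3}`.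
-/

open Finset SimpleGraph Equiv
open scoped Pointwise

variable {V W : Type*} {G : SimpleGraph V} {ℓ : ℕ}

def PathFree (G : SimpleGraph V) (ℓ : ℕ) : Prop :=
  ∀ (u v : V) (p : G.Walk u v), p.IsPath → p.length ≠ ℓ

lemma CycleFree.of_embedding {G' : SimpleGraph W} (f : G' ↪g G) (h : CycleFree G ℓ) :
    CycleFree G' ℓ :=
  fun _ c hc hlen => h _ (c.map f.toHom) (hc.map f.injective) (by rw [Walk.length_map, hlen])

lemma CycleFree.map (f : V ↪ W) (h : CycleFree G ℓ) : CycleFree (G.map f) ℓ := by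
  intro w c hc hlen
  have hrange : ∀ x ∈ c.support, x ∈ Set.range f := fun x hx => by
    obtain ⟨y, hxy⟩ := mem_support_of_mem_walk_support c hc.not_nil hx
    obtain ⟨a, -, -, rfl, -⟩ := (map_adj f G _ _).mp hxy
    exact ⟨a, rfl⟩
  have hmap := Walk.map_induce c hrange
  refine h.of_embedding (Embedding.map f G).isoInduceRange.symm.toEmbedding _
    (c.induce _ hrange) ?_ ?_
  · rw [← hmap] at hc
    exact hc.of_map
  · have hlen' := congrArg Walk.length hmap
    rw [Walk.length_map] at hlen'
    exact hlen'.trans hlen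

lemma exists_isCycle_of_isPath {u v w : V} {p : G.Walk u v} (hp : p.IsPath) (hlen : 1 ≤ p.length)
    (hw : w ∉ p.support) (hwu : G.Adj w u) (hvw : G.Adj v w) :
    ∃ (x : V) (c : G.Walk x x), c.IsCycle ∧ c.length = p.length + 2 := by
  refine ⟨v, .cons hvw (.cons hwu p), ?_, by simp⟩
  have hq : (Walk.cons hwu p).IsPath := (Walk.cons_isPath_iff _ _).mpr ⟨hp, hw⟩
  rw [Walk.isCycle_iff_isPath_tail_and_le_length, Walk.tail_cons]
  exact ⟨by simpa using hq, by simp; omega⟩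

lemma CycleFree.pathFree_of_support_subset {H : SimpleGraph V} {a : V} (hG : CycleFree G (ℓ + 2))
    (hℓ : 1 ≤ ℓ) (hle : H ≤ G) (hH : H.support ⊆ G.neighborSet a) : PathFree H ℓ := by
  intro u v p hp hlen
  have hnil : ¬p.Nil := fun h => by rw [Walk.length_eq_zero_iff.mpr h] at hlen; omega
  have ha : ∀ x ∈ p.support, G.Adj a x := fun x hx =>
    hH (mem_support_of_mem_walk_support p hnil hx)
  obtain ⟨x, c, hc, hclen⟩ := exists_isCycle_of_isPath (w := a) ((Walk.isPath_mapLe hle).mpr hp)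
    (by rw [Walk.length_mapLe]; omega)
    (by rw [Walk.support_mapLe_eq_support]; exact fun h => G.loopless.irrefl a (ha a h))
    (ha u p.start_mem_support) (ha v p.end_mem_support).symm
  exact hG x c hc (by rw [hclen, Walk.length_mapLe, hlen])

lemma le_exBipCycle {m n : ℕ} {H : SimpleGraph (Fin m ⊕ Fin n)}
    (hbip : ∀ u v, H.Adj u v → u.isLeft ≠ v.isLeft) (hcyc : CycleFree H ℓ) :
    H.edgeSet.ncard ≤ exBipCycle m n ℓ := by
  refine le_csSup ⟨Nat.card (Sym2 (Fin m ⊕ Fin n)), ?_⟩ ⟨H, hbip, hcyc, rfl⟩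
  rintro _ ⟨H', -, -, rfl⟩
  exact Set.ncard_le_card _

lemma SimpleGraph.ncard_edgeSet_map (f : V ↪ W) (G : SimpleGraph V) :
    (G.map f).edgeSet.ncard = G.edgeSet.ncard := by
  rw [edgeSet_map, Set.ncard_image_of_injective _ f.sym2Map.injective]

lemma SimpleGraph.IsBipartiteWith.ncard_edgeSet_le_exBipCycle {s t : Finset V} {m : ℕ}
    (hG : G.IsBipartiteWith s t) (hs : #s ≤ m) (ht : #t ≤ m) (hcyc : CycleFree G ℓ) :
    G.edgeSet.ncard ≤ exBipCycle m m ℓ := by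
  have hst : ∀ {a b : V}, a ∈ s → b ∈ t → a ≠ b := fun ha hb hab =>
    Set.disjoint_left.mp hG.disjoint (Finset.mem_coe.mpr ha) (Finset.mem_coe.mpr (hab ▸ hb))
  let ι : s ⊕ t ↪ V := ⟨Sum.elim (↑) (↑),
    Subtype.val_injective.sumElim Subtype.val_injective fun a b => hst a.2 b.2⟩
  obtain ⟨es⟩ := Function.Embedding.nonempty_of_card_le (α := s) (β := Fin m)
    (by simpa using hs)
  obtain ⟨et⟩ := Function.Embedding.nonempty_of_card_le (α := t) (β := Fin m)
    (by simpa using ht)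
  set K := G.comap ι
  have hK : K.map ι = G := by
    ext u v
    rw [map_adj]
    refine ⟨fun ⟨a, b, hab, hau, hbv⟩ => hau ▸ hbv ▸ hab, fun huv => ?_⟩
    rcases hG.mem_of_adj huv with ⟨hu, hv⟩ | ⟨hu, hv⟩
    · exact ⟨.inl ⟨u, hu⟩, .inr ⟨v, hv⟩, huv, rfl, rfl⟩
    · exact ⟨.inr ⟨u, hu⟩, .inl ⟨v, hv⟩, huv, rfl, rfl⟩
  have hbip : ∀ u v, (K.map (es.sumMap et)).Adj u v → u.isLeft ≠ v.isLeft := by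
    intro u v huv
    obtain ⟨a, b, hab, rfl, rfl⟩ := (map_adj _ _ _ _).mp huv
    have hab : G.Adj (ι a) (ι b) := hab
    rcases a with a | a <;> rcases b with b | b <;> simp
    · exact hst b.2 (hG.mem_of_mem_adj a.2 hab) rfl
    · exact hst (hG.symm.mem_of_mem_adj a.2 hab) b.2 rfl
  calc G.edgeSet.ncard = (K.map (es.sumMap et)).edgeSet.ncard := by
        rw [ncard_edgeSet_map, ← ncard_edgeSet_map ι, hK]
    _ ≤ exBipCycle m m ℓ :=
        le_exBipCycle hbip ((hcyc.of_embedding (Embedding.comap ι G)).map _)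

lemma SimpleGraph.exists_isPath_forall_length_le [Fintype V] (u : V) :
    ∃ (a b : V) (p : G.Walk a b), p.IsPath ∧
      ∀ (a' b' : V) (q : G.Walk a' b'), q.IsPath → q.length ≤ p.length := by
  classical
  let P : ℕ → Prop := fun L => ∃ (a b : V) (p : G.Walk a b), p.IsPath ∧ p.length = L
  have hP0 : P 0 := ⟨u, u, .nil, Walk.IsPath.nil, rfl⟩
  obtain ⟨a, b, p, hp, hlen⟩ := Nat.findGreatest_spec (Nat.zero_le (Fintype.card V)) hP0
  refine ⟨a, b, p, hp, fun a' b' q hq => hlen ▸ ?_⟩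
  exact Nat.le_findGreatest hq.length_lt.le ⟨a', b', q, hq, rfl⟩

/-- In a longest path `p` of a bipartite graph, the neighbours of the first vertex all lie on `p`
at odd distances from it, so its degree is at most `(p.length + 1) / 2`. -/
lemma SimpleGraph.IsBipartite.exists_isPath_length_eq_of_forall_le_degree [Fintype V]
    [DecidableRel G.Adj] (hbip : G.IsBipartite) {k : ℕ}
    (hdeg : ∀ v ∈ G.support, k + 1 ≤ G.degree v) {x y : V} (hxy : G.Adj x y) :
    ∃ (u v : V) (p : G.Walk u v), p.IsPath ∧ p.length = 2 * k + 1 := by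
  classical
  obtain ⟨u, v, p, hp, hmax⟩ := exists_isPath_forall_length_le (G := G) x
  have hlen : 1 ≤ p.length := by simpa using hmax _ _ (Adj.toWalk hxy) (Adj.isPath_toWalk hxy)
  have hu : u ∈ G.support := by
    cases p with
    | nil => simp at hlen
    | cons h _ => exact ⟨_, h⟩
  have hnbr : ∀ w, G.Adj u w → w ∈ p.support := fun w huw => by
    by_contra hw
    have := hmax _ _ (.cons huw.symm p) ((Walk.cons_isPath_iff _ _).mpr ⟨hp, hw⟩)
    simp at this
  let c : G.Coloring Bool := hbip.toColoring (by simp)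
  have hodd : ∀ w, G.Adj u w → Odd (p.support.idxOf w) := fun w huw => by
    rw [← Walk.length_takeUntil _ (hnbr w huw), c.odd_length_iff_not_congr]
    have := c.valid huw
    revert this
    cases c u <;> cases c w <;> simp
  have hdeg_le : G.degree u ≤ (p.length + 1) / 2 := by
    rw [← card_neighborFinset_eq_degree, ← Finset.card_range ((p.length + 1) / 2)]
    refine Finset.card_le_card_of_injOn (fun w => p.support.idxOf w / 2) (fun w hw => ?_)
      (fun w hw w' hw' hww' => ?_)
    · rw [Finset.mem_coe, mem_neighborFinset] at hw
      have hlt := List.idxOf_lt_length_of_mem (hnbr w hw)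
      have := Nat.odd_iff.mp (hodd w hw)
      simp only [Walk.length_support, Finset.coe_range, Set.mem_Iio] at hlt ⊢
      omega
    · rw [Finset.mem_coe, mem_neighborFinset] at hw hw'
      have h1 := Nat.odd_iff.mp (hodd w hw)
      have h2 := Nat.odd_iff.mp (hodd w' hw')
      refine (List.idxOf_inj (hnbr w hw)).mp ?_
      simp only at hww'
      omega
  refine ⟨u, _, p.take (2 * k + 1), hp.take _, ?_⟩
  have := hdeg u hu
  rw [Walk.take_length]
  omega

lemma PathFree.mono {G' : SimpleGraph V} (hle : G' ≤ G) (h : PathFree G ℓ) : PathFree G' ℓ :=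
  fun _ _ p hp => by simpa using h _ _ (p.mapLe hle) ((Walk.isPath_mapLe hle).mpr hp)

theorem PathFree.card_edgeFinset_le [Fintype V] [DecidableRel G.Adj] {k : ℕ}
    (hbip : G.IsBipartite) (hG : PathFree G (2 * k + 1)) :
    #G.edgeFinset ≤ k * G.support.ncard := by
  classical
  induction hE : #G.edgeFinset using Nat.strong_induction_on generalizing G with
  | _ E ih =>
  by_cases hlow : ∃ v ∈ G.support, G.degree v ≤ k
  · obtain ⟨v, hv, hdeg⟩ := hlow
    have hle := G.deleteIncidenceSet_le v
    have hsupp : (G.deleteIncidenceSet v).support ⊆ G.support \ {v} := fun x ⟨y, hxy⟩ =>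
      ⟨⟨y, (deleteIncidenceSet_adj.mp hxy).1⟩, (deleteIncidenceSet_adj.mp hxy).2.1⟩
    have hpos := (G.degree_pos_iff_mem_support v).mpr hv
    have hE' := G.card_edgeFinset_deleteIncidenceSet v
    have hdegE := G.degree_le_card_edgeFinset v
    have ih' := ih _ (by omega) (hbip.mono_left hle) (hG.mono hle) rfl
    have hcard := (Set.ncard_le_ncard hsupp).trans_eq (Set.ncard_sdiff_singleton_of_mem hv)
    have hcard_pos : 0 < G.support.ncard := (Set.ncard_pos (Set.toFinite _)).mpr ⟨v, hv⟩
    calc E = #(G.deleteIncidenceSet v).edgeFinset + G.degree v := by omega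
      _ ≤ k * (G.support.ncard - 1) + k :=
        add_le_add (ih'.trans (Nat.mul_le_mul_left k hcard)) hdeg
      _ = k * G.support.ncard := by
        rw [Nat.mul_sub_one, Nat.sub_add_cancel (Nat.le_mul_of_pos_right k hcard_pos)]
  · simp only [not_exists, not_and, not_le] at hlow
    rcases Nat.eq_zero_or_pos E with rfl | hpos
    · exact Nat.zero_le _
    obtain ⟨x, y, hxy⟩ := ne_bot_iff_exists_adj.mp
      (edgeFinset_nonempty.mp (Finset.card_pos.mp (hE ▸ hpos)))
    obtain ⟨u, v, p, hp, hlen⟩ :=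
      IsBipartite.exists_isPath_length_eq_of_forall_le_degree hbip hlow hxy
    exact absurd hlen (hG u v p hp)

variable (G) in
def SimpleGraph.rainbowEdgeGraph (χ : V → Fin 3) (i j : Fin 3) : SimpleGraph V where
  Adj x y := G.Adj x y ∧ (χ x = i ∧ χ y = j ∨ χ x = j ∧ χ y = i) ∧
    ∃ z, χ z ≠ i ∧ χ z ≠ j ∧ G.Adj x z ∧ G.Adj y z
  symm := ⟨fun _ _ ⟨h, hc, z, hzi, hzj, hxz, hyz⟩ =>
    ⟨h.symm, hc.symm.imp And.symm And.symm, z, hzi, hzj, hyz, hxz⟩⟩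
  loopless := ⟨fun x h => G.loopless.irrefl x h.1⟩

section Coloured

variable {χ : V → Fin 3} {i j : Fin 3}

instance [Fintype V] [DecidableRel G.Adj] : DecidableRel (G.rainbowEdgeGraph χ i j).Adj :=
  fun _ _ => inferInstanceAs (Decidable (_ ∧ _ ∧ _))

lemma SimpleGraph.rainbowEdgeGraph_le : G.rainbowEdgeGraph χ i j ≤ G := fun _ _ h => h.1

lemma SimpleGraph.isBipartiteWith_rainbowEdgeGraph [Fintype V] (hij : i ≠ j) :
    (G.rainbowEdgeGraph χ i j).IsBipartiteWith ↑({x | χ x = i} : Finset V)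
      ↑({x | χ x = j} : Finset V) where
  disjoint := by
    rw [Finset.disjoint_coe, Finset.disjoint_filter]
    exact fun x _ hi hj => hij (hi.symm.trans hj)
  mem_of_adj _ _ h := by simpa using h.2.1

lemma CycleFree.rainbowEdgeGraph (hG : CycleFree G (ℓ + 1)) :
    CycleFree (G.rainbowEdgeGraph χ i j) ℓ := by
  intro v c hc hlen
  cases c with
  | nil => exact Walk.not_isCycle_nil hc
  | cons h p =>
    have h3 := hc.three_le_length
    rw [Walk.cons_isCycle_iff] at hc
    rw [Walk.length_cons] at h3 hlen
    obtain ⟨-, -, z, hzi, hzj, hvz, hwz⟩ := h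
    have hz : z ∉ p.support := fun hz => by
      have hnil : ¬p.Nil := fun h => by rw [Walk.length_eq_zero_iff.mpr h] at h3; omega
      obtain ⟨y, -, hcol, -⟩ := mem_support_of_mem_walk_support p hnil hz
      rcases hcol with ⟨h, -⟩ | ⟨h, -⟩
      exacts [hzi h, hzj h]
    obtain ⟨x, c, hc', hclen⟩ := exists_isCycle_of_isPath
      ((Walk.isPath_mapLe rainbowEdgeGraph_le).mpr hc.1) (by rw [Walk.length_mapLe]; omega)
      (by rwa [Walk.support_mapLe_eq_support]) hwz.symm hvz
    exact hG x c hc' (by rw [hclen, Walk.length_mapLe]; omega)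

lemma SimpleGraph.card_edgeFinset_rainbowEdgeGraph_le [Fintype V] [DecidableRel G.Adj] {m : ℕ}
    (hG : CycleFree G (ℓ + 1)) (hij : i ≠ j) (hi : #({x | χ x = i} : Finset V) ≤ m)
    (hj : #({x | χ x = j} : Finset V) ≤ m) :
    #(G.rainbowEdgeGraph χ i j).edgeFinset ≤ exBipCycle m m ℓ := by
  rw [← Set.ncard_coe_finset, coe_edgeFinset]
  exact (isBipartiteWith_rainbowEdgeGraph hij).ncard_edgeSet_le_exBipCycle hi hj
    hG.rainbowEdgeGraph

end Coloured

lemma SimpleGraph.ncard_neighborSet [Fintype V] [DecidableRel G.Adj] (v : V) :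
    (G.neighborSet v).ncard = G.degree v := by
  rw [Set.ncard_eq_toFinset_card', Set.toFinset_card, card_neighborSet_eq_degree]

section Triangles

variable [Fintype V] [DecidableEq V] [DecidableRel G.Adj] {χ : V → Fin 3}

variable (G) in
def SimpleGraph.rainbowTriangles (χ : V → Fin 3) : Finset (Finset V) :=
  {s ∈ G.cliqueFinset 3 | s.image χ = univ}

lemma SimpleGraph.card_rainbowTriangles_filter_mem_le {k : ℕ} (hG : CycleFree G (2 * k + 3))
    {a : V} (ha : χ a = 0) :
    #{s ∈ G.rainbowTriangles χ | a ∈ s} ≤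
      k * ((G.rainbowEdgeGraph χ 0 1).degree a + (G.rainbowEdgeGraph χ 0 2).degree a) := by
  classical
  set L := G.between (G.neighborSet a ∩ {x | χ x = 1}) (G.neighborSet a ∩ {x | χ x = 2})
  have hL : L.IsBipartiteWith _ _ := between_isBipartiteWith <|
    Set.disjoint_left.mpr fun x h1 h2 => absurd (h1.2.symm.trans h2.2) (by decide)
  have hLN : L.support ⊆ G.neighborSet a := (isBipartiteWith_support_subset hL).trans
    (Set.union_subset Set.inter_subset_left Set.inter_subset_left)
  have hLfree : PathFree L (2 * k + 1) :=
    hG.pathFree_of_support_subset (by omega) (between_le) hLN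
  have hsupp : L.support ⊆
      (G.rainbowEdgeGraph χ 0 1).neighborSet a ∪ (G.rainbowEdgeGraph χ 0 2).neighborSet a := by
    rintro x ⟨y, hxy, ⟨⟨hax, hx : χ x = 1⟩, ⟨hay, hy : χ y = 2⟩⟩ |
      ⟨⟨hax, hx : χ x = 2⟩, ⟨hay, hy : χ y = 1⟩⟩⟩
    · left
      exact ⟨hax, .inl ⟨ha, hx⟩, y, by simp [hy], by simp [hy], hay, hxy⟩
    · right
      exact ⟨hax, .inl ⟨ha, hx⟩, y, by simp [hy], by simp [hy], hay, hxy⟩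
  calc #{s ∈ G.rainbowTriangles χ | a ∈ s}
      ≤ #L.edgeFinset := card_le_card_of_surjOn (fun e => insert a e.toFinset) ?_
    _ ≤ k * L.support.ncard := hLfree.card_edgeFinset_le hL.isBipartite
    _ ≤ k * ((G.rainbowEdgeGraph χ 0 1).degree a + (G.rainbowEdgeGraph χ 0 2).degree a) := by
      rw [← ncard_neighborSet, ← ncard_neighborSet]
      exact Nat.mul_le_mul_left k ((Set.ncard_le_ncard hsupp).trans (Set.ncard_union_le _ _))
  intro s hs
  simp only [rainbowTriangles, coe_filter, Finset.mem_filter, Set.mem_ofPred_eq,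
    mem_cliqueFinset_iff] at hs
  obtain ⟨⟨⟨hclique, hcard⟩, himage⟩, has⟩ := hs
  obtain ⟨x, hx, hx1⟩ := mem_image.mp (himage ▸ mem_univ (1 : Fin 3))
  obtain ⟨y, hy, hy2⟩ := mem_image.mp (himage ▸ mem_univ (2 : Fin 3))
  have hne : ∀ {u v}, χ u ≠ χ v → u ≠ v := fun h huv => h (huv ▸ rfl)
  have hadj : ∀ {u v}, u ∈ s → v ∈ s → χ u ≠ χ v → G.Adj u v := fun hu hv h =>
    hclique hu hv (hne h)
  refine ⟨s(x, y), ?_, ?_⟩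
  · rw [Finset.mem_coe, mem_edgeFinset]
    refine ⟨hadj hx hy (by simp [hx1, hy2]),
      .inl ⟨⟨hadj has hx ?_, hx1⟩, ⟨hadj has hy ?_, hy2⟩⟩⟩ <;> simp [ha, hx1, hy2]
  · show insert a s(x, y).toFinset = s
    rw [Sym2.toFinset_mk_eq]
    refine eq_of_subset_of_card_le ?_ ?_
    · exact insert_subset has (insert_subset hx (singleton_subset_iff.mpr hy))
    · rw [hcard, card_insert_of_notMem (by simp [hne, ha, hx1, hy2]),
        card_pair (hne (by simp [hx1, hy2]))]

theorem SimpleGraph.card_rainbowTriangles_le {k : ℕ} (hG : CycleFree G (2 * k + 3)) :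
    #(G.rainbowTriangles χ) ≤ k * (#(G.rainbowEdgeGraph χ 0 1).edgeFinset +
      #(G.rainbowEdgeGraph χ 0 2).edgeFinset) := by
  have hcover : G.rainbowTriangles χ ⊆
      ({x | χ x = 0} : Finset V).biUnion fun a => {s ∈ G.rainbowTriangles χ | a ∈ s} := by
    intro s hs
    have h0 : (0 : Fin 3) ∈ s.image χ := (mem_filter.mp hs).2 ▸ mem_univ 0
    obtain ⟨a, has, ha⟩ := mem_image.mp h0
    exact mem_biUnion.mpr ⟨a, by simpa using ha, mem_filter.mpr ⟨hs, has⟩⟩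
  calc #(G.rainbowTriangles χ)
      ≤ ∑ a ∈ {x | χ x = 0}, #{s ∈ G.rainbowTriangles χ | a ∈ s} :=
        (card_le_card hcover).trans card_biUnion_le
    _ ≤ ∑ a ∈ {x | χ x = 0},
          k * ((G.rainbowEdgeGraph χ 0 1).degree a + (G.rainbowEdgeGraph χ 0 2).degree a) :=
        sum_le_sum fun a ha => card_rainbowTriangles_filter_mem_le hG (by simpa using ha)
    _ = k * (#(G.rainbowEdgeGraph χ 0 1).edgeFinset +
          #(G.rainbowEdgeGraph χ 0 2).edgeFinset) := by
      rw [← mul_sum, sum_add_distrib,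
        isBipartiteWith_sum_degrees_eq_card_edges (isBipartiteWith_rainbowEdgeGraph (by decide)),
        isBipartiteWith_sum_degrees_eq_card_edges (isBipartiteWith_rainbowEdgeGraph (by decide))]

end Triangles

section Averaging

variable {α : Type*} [Fintype α] [DecidableEq α]

lemma card_smul_eq_eq_of_card_eq (s : Finset α) {t t' : Finset α} (ht : #t = #t') :
    #{σ : Perm α | σ • s = t} = #{σ : Perm α | σ • s = t'} := by
  obtain ⟨τ, hτ⟩ := (Set.powersetCard.isPretransitive (α := α) (n := #t)).exists_smul_eq
    ⟨t, rfl⟩ ⟨t', ht.symm⟩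
  have hτ : τ • t = t' := congrArg Subtype.val hτ
  refine card_nbij' (τ * ·) (τ⁻¹ * ·) ?_ ?_ (fun _ _ => by simp) (fun _ _ => by simp)
  · intro σ hσ
    simp only [coe_filter, Set.mem_ofPred_eq, mem_univ, true_and] at hσ ⊢
    rw [mul_smul, hσ, hτ]
  · intro σ hσ
    simp only [coe_filter, Set.mem_ofPred_eq, mem_univ, true_and] at hσ ⊢
    rw [mul_smul, hσ, ← hτ, inv_smul_smul]

lemma card_smul_eq_mul_choose {s t : Finset α} (ht : #t = #s) :
    #{σ : Perm α | σ • s = t} * (Fintype.card α).choose #s = (Fintype.card α).factorial := by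
  have hmaps : ∀ σ ∈ (univ : Finset (Perm α)), σ • s ∈ powersetCard #s (univ : Finset α) :=
    fun σ _ => mem_powersetCard.mpr ⟨subset_univ _, card_smul_finset σ s⟩
  rw [← Fintype.card_perm, ← card_univ (α := Perm α), card_eq_sum_card_fiberwise hmaps,
    sum_congr rfl fun t' ht' => card_smul_eq_eq_of_card_eq s
      ((mem_powersetCard.mp ht').2.trans ht.symm), sum_const, card_powersetCard, card_univ,
    smul_eq_mul, mul_comm]

lemma card_smul_mem_mul_choose (s : Finset α) {R : Finset (Finset α)} (hR : ∀ t ∈ R, #t = #s) :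
    #{σ : Perm α | σ • s ∈ R} * (Fintype.card α).choose #s =
      #R * (Fintype.card α).factorial := by
  have hmaps : ∀ σ ∈ ({σ : Perm α | σ • s ∈ R} : Finset _), σ • s ∈ R :=
    fun σ hσ => (mem_filter.mp hσ).2
  rw [card_eq_sum_card_fiberwise hmaps, sum_mul, sum_congr rfl fun t ht => ?_, sum_const,
    smul_eq_mul]
  rw [filter_filter, filter_congr fun σ _ => and_iff_right_of_imp fun h => h ▸ ht,
    card_smul_eq_mul_choose (hR t ht)]

lemma exists_perm_card_mul_card_le {r : ℕ} (T R : Finset (Finset α)) (hT : ∀ s ∈ T, #s = r)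
    (hR : ∀ t ∈ R, #t = r) :
    ∃ σ : Perm α, #T * #R ≤ #{s ∈ T | σ • s ∈ R} * (Fintype.card α).choose r := by
  have hswap : ∑ σ : Perm α, #{s ∈ T | σ • s ∈ R} = ∑ s ∈ T, #{σ : Perm α | σ • s ∈ R} :=
    sum_card_bipartiteAbove_eq_sum_card_bipartiteBelow (fun σ s => σ • s ∈ R)
  have hsum : ∑ σ : Perm α, #{s ∈ T | σ • s ∈ R} * (Fintype.card α).choose r =
      ∑ _σ : Perm α, #T * #R := by
    have hterm : ∀ s ∈ T, #{σ : Perm α | σ • s ∈ R} * (Fintype.card α).choose r =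
        #R * (Fintype.card α).factorial := fun s hs => by
      rw [← hT s hs, card_smul_mem_mul_choose s fun t ht => (hR t ht).trans (hT s hs).symm]
    rw [← sum_mul, hswap, sum_mul, sum_congr rfl hterm, sum_const, sum_const, card_univ,
      Fintype.card_perm, smul_eq_mul, smul_eq_mul]
    ring
  obtain ⟨σ, -, hσ⟩ := exists_le_of_sum_le univ_nonempty hsum.ge
  exact ⟨σ, hσ⟩

lemma card_mul_card_mul_card_le_card_rainbow (χ : α → Fin 3) :
    #{x | χ x = 0} * #{x | χ x = 1} * #{x | χ x = 2} ≤
      #{t : Finset α | #t = 3 ∧ t.image χ = univ} := by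
  rw [← card_product, ← card_product]
  refine card_le_card_of_injOn (fun p => {p.1.1, p.1.2, p.2}) ?_ ?_
  · rintro ⟨⟨a, b⟩, c⟩ h
    simp only [coe_product, coe_filter, Set.mem_prod, Set.mem_ofPred_eq, mem_univ, true_and] at h
    obtain ⟨⟨ha, hb⟩, hc⟩ := h
    have hab : a ≠ b := fun h => by simp [h, hb] at ha
    have hac : a ≠ c := fun h => by simp [h, hc] at ha
    have hbc : b ≠ c := fun h => by simp [h, hc] at hb
    simp only [coe_filter, Set.mem_ofPred_eq, mem_univ, true_and]
    refine ⟨card_eq_three.mpr ⟨a, b, c, hab, hac, hbc, rfl⟩, ?_⟩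
    simp only [image_insert, image_singleton, ha, hb, hc]
    decide
  · rintro ⟨⟨a, b⟩, c⟩ h ⟨⟨a', b'⟩, c'⟩ h' heq
    simp only [coe_product, coe_filter, Set.mem_prod, Set.mem_ofPred_eq, mem_univ,
      true_and] at h h'
    obtain ⟨⟨ha, hb⟩, hc⟩ := h
    obtain ⟨⟨ha', hb'⟩, hc'⟩ := h'
    simp only at heq
    have key : ∀ i : Fin 3, ({a, b, c} : Finset α).filter (χ · = i) =
        ({a', b', c'} : Finset α).filter (χ · = i) := fun i => by rw [heq]
    have h0 := key 0
    have h1 := key 1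
    have h2 := key 2
    simp [filter_insert, filter_singleton, ha, hb, hc, ha', hb', hc'] at h0 h1 h2
    simp [h0, h1, h2]

lemma exists_perm_card_mul_le_card_rainbow (χ : α → Fin 3) (T : Finset (Finset α))
    (hT : ∀ s ∈ T, #s = 3) :
    ∃ σ : Perm α, #T * (#{x | χ x = 0} * #{x | χ x = 1} * #{x | χ x = 2}) ≤
      #{s ∈ T | s.image (χ ∘ σ) = univ} * (Fintype.card α).choose 3 := by
  obtain ⟨σ, hσ⟩ := exists_perm_card_mul_card_le T {t | #t = 3 ∧ t.image χ = univ} hT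
    fun t ht => (mem_filter.mp ht).2.1
  refine ⟨σ, (Nat.mul_le_mul_left _ (card_mul_card_mul_card_le_card_rainbow χ)).trans ?_⟩
  refine hσ.trans_eq (congrArg (· * _) (congrArg card (filter_congr fun s hs => ?_)))
  rw [mem_filter, card_smul_finset, hT s hs, smul_finset_def, image_image]
  simp [Function.comp_def, Perm.smul_def]

end Averaging

lemma two_mul_choose_three_le {n a b c : ℕ} (ha : n ≤ 3 * a) (hb : n - 1 ≤ 3 * b)
    (hc : n - 2 ≤ 3 * c) : 2 * n.choose 3 ≤ 9 * (a * b * c) := by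
  have h6 : 6 * n.choose 3 = n * (n - 1) * (n - 2) := by
    have := Nat.descFactorial_eq_factorial_mul_choose n 3
    simp [Nat.descFactorial, Nat.factorial] at this
    rw [← this]
    ring
  have := Nat.mul_le_mul (Nat.mul_le_mul ha hb) hc
  nlinarith

lemma card_filter_mod_three (n : ℕ) (i : Fin 3) :
    #{x : Fin n | (x : ℕ) % 3 = i} = n / 3 + if (i : ℕ) < n % 3 then 1 else 0 := by
  have hcount := Nat.count_modEq_card (b := n) (by norm_num : 0 < 3) (i : ℕ)
  rw [Nat.mod_eq_of_lt i.isLt] at hcount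
  rw [← hcount, Nat.count_eq_card_filter_range, ← Nat.Iio_eq_range,
    ← Fin.map_valEmbedding_univ, filter_map, card_map]
  congr 1
  ext x
  simp [Nat.ModEq, Nat.mod_eq_of_lt i.isLt]

theorem exists_coloring_two_mul_card_cliqueFinset_le {n : ℕ} (G : SimpleGraph (Fin n))
    [DecidableRel G.Adj] :
    ∃ χ : Fin n → Fin 3, (∀ i, #{x | χ x = i} ≤ (n + 2) / 3) ∧
      2 * #(G.cliqueFinset 3) ≤ 9 * #(G.rainbowTriangles χ) := by
  let χ₀ : Fin n → Fin 3 := fun x => ⟨x % 3, Nat.mod_lt _ (by norm_num)⟩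
  have hclass : ∀ i, #{x | χ₀ x = i} = n / 3 + if (i : ℕ) < n % 3 then 1 else 0 := fun i => by
    rw [← card_filter_mod_three]
    simp [χ₀, Fin.ext_iff]
  obtain ⟨σ, hσ⟩ := exists_perm_card_mul_le_card_rainbow χ₀ (G.cliqueFinset 3)
    fun s hs => (mem_cliqueFinset_iff.mp hs).2
  refine ⟨χ₀ ∘ σ, fun i => ?_, ?_⟩
  · rw [card_equiv σ (t := {x | χ₀ x = i}) (by simp), hclass]
    split_ifs <;> omega
  have hchoose := two_mul_choose_three_le (n := n) (a := #{x | χ₀ x = 0})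
    (b := #{x | χ₀ x = 1}) (c := #{x | χ₀ x = 2})
    (by rw [hclass]; split_ifs with h <;> simp at h <;> omega)
    (by rw [hclass]; split_ifs with h <;> simp at h <;> omega)
    (by rw [hclass]; split_ifs with h <;> simp at h <;> omega)
  set P := #{x | χ₀ x = 0} * #{x | χ₀ x = 1} * #{x | χ₀ x = 2}
  rw [Fintype.card_fin] at hσ
  rcases Nat.eq_zero_or_pos (n.choose 3) with hC | hC
  · have hT := G.card_cliqueFinset_le (n := 3)
    rw [Fintype.card_fin, hC, Nat.le_zero] at hT
    simp [hT]
  refine Nat.le_of_mul_le_mul_right ?_ hC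
  calc 2 * #(G.cliqueFinset 3) * n.choose 3 = #(G.cliqueFinset 3) * (2 * n.choose 3) := by ring
    _ ≤ #(G.cliqueFinset 3) * (9 * P) := Nat.mul_le_mul_left _ hchoose
    _ = 9 * (#(G.cliqueFinset 3) * P) := by ring
    _ ≤ 9 * (#(G.rainbowTriangles (χ₀ ∘ σ)) * n.choose 3) := Nat.mul_le_mul_left 9 hσ
    _ = 9 * #(G.rainbowTriangles (χ₀ ∘ σ)) * n.choose 3 := (mul_assoc ..).symm

theorem card_cliqueFinset_three_le {n k : ℕ} (G : SimpleGraph (Fin n)) [DecidableRel G.Adj]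
    (hG : CycleFree G (2 * k + 3)) :
    #(G.cliqueFinset 3) ≤ 9 * k * exBipCycle ((n + 2) / 3) ((n + 2) / 3) (2 * k + 2) := by
  obtain ⟨χ, hbalanced, hrainbow⟩ := exists_coloring_two_mul_card_cliqueFinset_le G
  have hA := card_rainbowTriangles_le (χ := χ) hG
  have hB₁ := card_edgeFinset_rainbowEdgeGraph_le (ℓ := 2 * k + 2) hG (i := 0) (j := 1)
    (by decide) (hbalanced 0) (hbalanced 1)
  have hB₂ := card_edgeFinset_rainbowEdgeGraph_le (ℓ := 2 * k + 2) hG (i := 0) (j := 2)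
    (by decide) (hbalanced 0) (hbalanced 2)
  set ex := exBipCycle ((n + 2) / 3) ((n + 2) / 3) (2 * k + 2)
  have h : 2 * #(G.cliqueFinset 3) ≤ 2 * (9 * k * ex) :=
    calc 2 * #(G.cliqueFinset 3) ≤ 9 * #(G.rainbowTriangles χ) := hrainbow
      _ ≤ 9 * (k * (#(G.rainbowEdgeGraph χ 0 1).edgeFinset +
          #(G.rainbowEdgeGraph χ 0 2).edgeFinset)) := Nat.mul_le_mul_left 9 hA
      _ ≤ 9 * (k * (ex + ex)) := by gcongr
      _ = 2 * (9 * k * ex) := by ring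
  omega

/-- `t_{2k+1}(n) ≤ 9(k-1)·ex(⌈n/3⌉, ⌈n/3⌉, C_{2k})` for `k ≥ 2`. -/
theorem stmt12 (n k : ℕ) (hk : 2 ≤ k) :
    triMax n (2 * k + 1) ≤
      9 * (k - 1) * exBipCycle ((n + 2) / 3) ((n + 2) / 3) (2 * k) := by
  classical
  obtain ⟨k, rfl⟩ : ∃ k', k = k' + 1 := ⟨k - 1, by omega⟩
  refine csSup_le' ?_
  rintro _ ⟨G, hG, rfl⟩
  rw [← coe_cliqueFinset, Set.ncard_coe_finset, Nat.add_sub_cancel,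
    show 2 * (k + 1) = 2 * k + 2 by ring]
  exact card_cliqueFinset_three_le G hG
end

section
/- For k ≥ 2, ex₃(n, C^{(3)}_{2k}) ≤ t_{2k}(n) + ex(n, C_{2k}). -/
/-- The Turán number `ex(n, C_ℓ)`. -/
noncomputable def exCycle (n ℓ : ℕ) : ℕ :=
  sSup {m | ∃ G : SimpleGraph (Fin n), CycleFree G ℓ ∧ G.edgeSet.ncard = m}

/-- `ex₃(n, C^{(3)}_ℓ)`: the maximum number of hyperedges of a 3-uniform hypergraph on
`n` vertices with no Berge cycle of length `ℓ`. -/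
noncomputable def ex3Berge (n ℓ : ℕ) : ℕ :=
  sSup {m | ∃ H : Finset (Finset (Fin n)),
    (∀ E ∈ H, E.card = 3) ∧ ¬ HasBergeCycle H ℓ ∧ H.card = m}

namespace SimpleGraph

variable {V : Type*} {G : SimpleGraph V}

lemma edgeSet_sup_edge {x y : V} (hxy : x ≠ y) :
    (G ⊔ edge x y).edgeSet = insert s(x, y) G.edgeSet := by
  rw [edgeSet_sup, edgeSet_edge_of_ne hxy, Set.union_singleton]

lemma eqOn_update_edgeSet [DecidableEq V] {β : Type*} {x y : V} (hG : ¬ G.Adj x y)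
    (f : Sym2 V → β) (b : β) : Set.EqOn (Function.update f s(x, y) b) f G.edgeSet :=
  fun _ he => Function.update_of_ne (ne_of_mem_of_not_mem he hG) _ _

lemma image_update_edgeSet_sup_edge [DecidableEq V] {β : Type*} {x y : V} (hxy : x ≠ y)
    (hG : ¬ G.Adj x y) (f : Sym2 V → β) (b : β) :
    Function.update f s(x, y) b '' (G ⊔ edge x y).edgeSet = insert b (f '' G.edgeSet) := by
  rw [edgeSet_sup_edge hxy, Set.image_insert_eq, Function.update_self,
    (eqOn_update_edgeSet hG f b).image_eq]

lemma Walk.getVert_add_one_mod_length {u : V} (c : G.Walk u u) {i : ℕ} (hi : i < c.length) :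
    c.getVert ((i + 1) % c.length) = c.getVert (i + 1) := by
  rcases (Nat.add_one_le_of_lt hi).lt_or_eq with h | h
  · rw [Nat.mod_eq_of_lt h]
  · rw [h, Nat.mod_self, c.getVert_zero, c.getVert_length]

/-- `φ` witnesses that the hypergraph `H` contains a Berge copy of `G`. -/
structure IsBergeMap (G : SimpleGraph V) (H : Finset (Finset V)) (φ : Sym2 V → Finset V) :
    Prop where
  injOn : Set.InjOn φ G.edgeSet
  mem : ∀ e ∈ G.edgeSet, φ e ∈ H
  subset : ∀ e ∈ G.edgeSet, ∀ x ∈ e, x ∈ φ e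

namespace IsBergeMap

variable {H : Finset (Finset V)} {φ : Sym2 V → Finset V}

lemma mono {H' : Finset (Finset V)} (hφ : IsBergeMap G H φ) (hH : H ⊆ H') :
    IsBergeMap G H' φ :=
  ⟨hφ.injOn, fun e he => hH (hφ.mem e he), hφ.subset⟩

lemma hasBergeCycle (hφ : IsBergeMap G H φ) {u : V} {c : G.Walk u u} (hc : c.IsCycle) :
    HasBergeCycle H c.length := by
  have hedge : ∀ i : Fin c.length, c.edges[i]'(by simp) ∈ G.edgeSet := fun i =>
    c.edges_subset_edgeSet (List.getElem_mem _)
  refine ⟨fun i => φ (c.edges[i]'(by simp)), fun i => c.getVert i, ?_, ?_,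
    fun i => hφ.mem _ (hedge i), fun i => ?_⟩
  · intro i j hij
    exact Fin.ext (hc.edges_nodup.getElem_inj_iff.mp (hφ.injOn (hedge i) (hedge j) hij))
  · intro i j hij
    exact Fin.ext (hc.getVert_injOn' (Nat.le_sub_one_of_lt i.isLt) (Nat.le_sub_one_of_lt j.isLt) hij)
  · have hsub := hφ.subset _ (hedge i)
    have hei : c.edges[i]'(by simp) = s(c.getVert i, c.getVert (i + 1)) := Walk.getElem_edges _
    refine ⟨hsub _ (hei ▸ Sym2.mem_mk_left _ _), ?_⟩
    show c.getVert ((i + 1) % c.length) ∈ _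
    rw [c.getVert_add_one_mod_length i.isLt]
    exact hsub _ (hei ▸ Sym2.mem_mk_right _ _)

lemma cycleFree {ℓ : ℕ} (hφ : IsBergeMap G H φ) (hH : ¬ HasBergeCycle H ℓ) : CycleFree G ℓ :=
  fun _ _ hc hlen => hH (hlen ▸ hφ.hasBergeCycle hc)

lemma sup_edge [DecidableEq V] {h : Finset V} {x y : V} (hφ : IsBergeMap G H φ) (hh : h ∉ H)
    (hx : x ∈ h) (hy : y ∈ h) (hxy : x ≠ y) (hG : ¬ G.Adj x y) :
    IsBergeMap (G ⊔ edge x y) (insert h H) (Function.update φ s(x, y) h) := by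
  have hold := eqOn_update_edgeSet hG φ h
  refine ⟨?_, ?_, ?_⟩ <;> rw [edgeSet_sup_edge hxy]
  · rw [Set.injOn_insert (show s(x, y) ∉ G.edgeSet from hG), Function.update_self,
      hold.image_eq]
    refine ⟨hφ.injOn.congr hold.symm, ?_⟩
    rintro ⟨e, he, rfl⟩
    exact hh (hφ.mem e he)
  · rintro e (rfl | he)
    · rw [Function.update_self]
      exact Finset.mem_insert_self _ _
    · rw [hold he]
      exact Finset.mem_insert_of_mem (hφ.mem e he)
  · rintro e (rfl | he) z hz
    · rw [Function.update_self]
      rcases Sym2.mem_iff.mp hz with rfl | rfl <;> assumption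
    · rw [hold he]
      exact hφ.subset e he z hz

lemma card_le_ncard_cliqueSet_add_ncard_edgeSet [Finite V] (hφ : IsBergeMap G H φ)
    (h3 : ∀ h ∈ H, h.card = 3)
    (hcover : ∀ h ∈ H, h ∈ φ '' G.edgeSet ∨ G.IsClique (h : Set V)) :
    H.card ≤ (G.cliqueSet 3).ncard + G.edgeSet.ncard := by
  have hsub : (H : Set (Finset V)) ⊆ G.cliqueSet 3 ∪ φ '' G.edgeSet := fun h hh =>
    (hcover h hh).symm.imp (fun hcl => ⟨hcl, h3 h hh⟩) id
  calc H.card = (H : Set (Finset V)).ncard := (Set.ncard_coe_finset H).symm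
    _ ≤ (G.cliqueSet 3 ∪ φ '' G.edgeSet).ncard := Set.ncard_le_ncard hsub (Set.toFinite _)
    _ ≤ (G.cliqueSet 3).ncard + (φ '' G.edgeSet).ncard := Set.ncard_union_le _ _
    _ = (G.cliqueSet 3).ncard + G.edgeSet.ncard := by rw [hφ.injOn.ncard_image]

end IsBergeMap

theorem exists_isBergeMap_forall_mem_image_or_isClique (H : Finset (Finset V)) :
    ∃ (G : SimpleGraph V) (φ : Sym2 V → Finset V), IsBergeMap G H φ ∧
      ∀ h ∈ H, h ∈ φ '' G.edgeSet ∨ G.IsClique (h : Set V) := by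
  classical
  induction H using Finset.induction_on with
  | empty => exact ⟨⊥, fun _ => ∅, ⟨by simp, by simp, by simp⟩, by simp⟩
  | insert h H hh ih =>
    obtain ⟨G, φ, hφ, hcover⟩ := ih
    by_cases hcl : G.IsClique (h : Set V)
    · refine ⟨G, φ, hφ.mono (Finset.subset_insert _ _), fun h' hh' => ?_⟩
      rcases Finset.mem_insert.mp hh' with rfl | hh'
      exacts [Or.inr hcl, hcover h' hh']
    obtain ⟨x, hx, y, hy, hxy, hG⟩ : ∃ x ∈ h, ∃ y ∈ h, x ≠ y ∧ ¬ G.Adj x y := by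
      simpa [IsClique, Set.Pairwise] using hcl
    refine ⟨G ⊔ edge x y, _, hφ.sup_edge hh hx hy hxy hG, fun h' hh' => ?_⟩
    rw [image_update_edgeSet_sup_edge hxy hG]
    rcases Finset.mem_insert.mp hh' with rfl | hh'
    · exact Or.inl (Set.mem_insert _ _)
    · exact (hcover h' hh').imp (Set.mem_insert_of_mem _) (fun hcl' => hcl'.mono le_sup_left)

end SimpleGraph

lemma bddAbove_setOf_ncard {α ι : Type*} [Finite α] (p : ι → Prop) (s : ι → Set α) :
    BddAbove {m | ∃ i, p i ∧ (s i).ncard = m} :=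
  ⟨Nat.card α, by rintro _ ⟨i, -, rfl⟩; exact Set.ncard_le_card _⟩

theorem stmt13_general (n k : ℕ) :
    ex3Berge n (2 * k) ≤ triMax n (2 * k) + exCycle n (2 * k) := by
  refine csSup_le' ?_
  rintro _ ⟨H, h3, hH, rfl⟩
  obtain ⟨G, φ, hφ, hcover⟩ := SimpleGraph.exists_isBergeMap_forall_mem_image_or_isClique H
  have hG := hφ.cycleFree hH
  calc H.card ≤ (G.cliqueSet 3).ncard + G.edgeSet.ncard :=
        hφ.card_le_ncard_cliqueSet_add_ncard_edgeSet h3 hcover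
    _ ≤ triMax n (2 * k) + exCycle n (2 * k) :=
        add_le_add (le_csSup (bddAbove_setOf_ncard _ _) ⟨G, hG, rfl⟩)
          (le_csSup (bddAbove_setOf_ncard _ _) ⟨G, hG, rfl⟩)

/-- `ex₃(n, C^{(3)}_{2k}) ≤ t_{2k}(n) + ex(n, C_{2k})` for `k ≥ 2`. -/
theorem stmt13 (n k : ℕ) (hk : 2 ≤ k) :
    ex3Berge n (2 * k) ≤ triMax n (2 * k) + exCycle n (2 * k) :=
  stmt13_general n k
end

section
/- Let H be a 3-uniform hypergraph with no Berge cycle of length 2k (k ≥ 2), and let H₁ be the set of hyperedges E possessing a pair P(E) ⊆ E contained in no other hyperedge of H. Then the graph G₁ with edge set {P(E) : E ∈ H₁} contains no cycle of length 2k, and |H₁| = e(G₁). -/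
/-- The graph `G₁` whose edges are the chosen pairs `P(E)`, `E ∈ H₁`. -/
def pairGraph {V : Type*} [DecidableEq V] (H₁ : Finset (Finset V))
    (P : Finset V → Finset V) : SimpleGraph V :=
  SimpleGraph.fromEdgeSet {e | ∃ E ∈ H₁, ∃ u v : V, u ≠ v ∧ P E = {u, v} ∧ e = s(u, v)}

open SimpleGraph

lemma support_getElem' {V : Type*} {G : SimpleGraph V} {a b : V} (p : G.Walk a b) (i : ℕ)
    (h : i < p.support.length) : p.support[i] = p.getVert i := by
  induction p generalizing i with
  | nil =>
    simp only [Walk.support_nil, List.length_singleton] at h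
    interval_cases i
    simp
  | cons hadj q ih =>
    cases i with
    | zero => simp
    | succ n =>
      simp only [Walk.support_cons, List.getElem_cons_succ, Walk.getVert_cons_succ]
      exact ih n (by simpa [Walk.length_support] using h)

lemma edges_getElem' {V : Type*} {G : SimpleGraph V} {a b : V} (p : G.Walk a b) (i : ℕ)
    (h : i < p.edges.length) : p.edges[i] = s(p.getVert i, p.getVert (i + 1)) := by
  induction p generalizing i with
  | nil => simp at h
  | cons hadj q ih =>
    cases i with
    | zero => simp [Walk.getVert_cons_succ]
    | succ n =>
      simp only [Walk.edges_cons, List.getElem_cons_succ, Walk.getVert_cons_succ]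
      exact ih n (by simpa using h)

lemma cycle_getVert_inj' {V : Type*} {G : SimpleGraph V} {a : V} {c : G.Walk a a}
    (hc : c.IsCycle) {i j : ℕ} (hi : i < c.length) (hj : j < c.length)
    (hij : c.getVert i = c.getVert j) : i = j := by
  have hnd := hc.support_nodup
  have hlen : c.support.tail.length = c.length := by
    simp [Walk.length_support]
  have key : ∀ m, (hm1 : 1 ≤ m) → (hm2 : m ≤ c.length) →
      c.support.tail[m - 1]'(by omega) = c.getVert m := by
    intro m hm1 hm2
    rw [List.getElem_tail, support_getElem']
    congr 1; omega
  have hlast : c.support.tail[c.length - 1]'(by omega) = a := by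
    have h1 : 1 ≤ c.length := by have := hc.three_le_length; omega
    rw [key c.length (by omega) le_rfl, Walk.getVert_length]
  rcases Nat.eq_zero_or_pos i with rfl | hi1 <;> rcases Nat.eq_zero_or_pos j with rfl | hj1
  · rfl
  · exfalso
    have : c.support.tail[j-1]'(by omega) = c.support.tail[c.length - 1]'(by omega) := by
      rw [key j hj1 hj.le, hlast, ← hij, Walk.getVert_zero]
    rw [hnd.getElem_inj_iff] at this
    omega
  · exfalso
    have : c.support.tail[i-1]'(by omega) = c.support.tail[c.length - 1]'(by omega) := by
      rw [key i hi1 hi.le, hlast, hij, Walk.getVert_zero]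
    rw [hnd.getElem_inj_iff] at this
    omega
  · have : c.support.tail[i-1]'(by omega) = c.support.tail[j-1]'(by omega) := by
      rw [key i hi1 hi.le, key j hj1 hj.le, hij]
    rw [hnd.getElem_inj_iff] at this
    omega

lemma finset_pair_to_sym2 {V : Type*} [DecidableEq V] {u v u' v' : V}
    (h : ({u, v} : Finset V) = {u', v'}) (huv : u ≠ v) (h' : u' ≠ v') :
    s(u, v) = s(u', v') := by
  have hu' : u' ∈ ({u, v} : Finset V) := by rw [h]; simp
  have hv' : v' ∈ ({u, v} : Finset V) := by rw [h]; simp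
  simp only [Finset.mem_insert, Finset.mem_singleton] at hu' hv'
  rcases hu' with rfl | rfl <;> rcases hv' with rfl | rfl <;>
    first
    | exact absurd rfl h'
    | rfl
    | exact Sym2.eq_swap

lemma sym2_to_finset_pair {V : Type*} [DecidableEq V] {u v u' v' : V}
    (h : s(u, v) = s(u', v')) : ({u, v} : Finset V) = {u', v'} := by
  rcases Sym2.eq_iff.mp h with ⟨rfl, rfl⟩ | ⟨rfl, rfl⟩
  · rfl
  · exact Finset.pair_comm _ _

/-- If `H` is 3-uniform with no Berge cycle of length `2k` (`k ≥ 2`), `H₁` is the set of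
hyperedges `E ∈ H` possessing a pair `P(E) ⊆ E` contained in no other hyperedge of `H`,
then the graph `G₁` with edge set `{P(E) : E ∈ H₁}` has no cycle of length `2k`, and
`|H₁| = e(G₁)`. -/
theorem stmt14 {V : Type*} [DecidableEq V] (H : Finset (Finset V)) (k : ℕ) (hk : 2 ≤ k)
    (h3 : ∀ E ∈ H, E.card = 3) (hB : ¬ HasBergeCycle H (2 * k))
    (H₁ : Finset (Finset V)) (P : Finset V → Finset V)
    (hsub : H₁ ⊆ H)
    (hP : ∀ E ∈ H₁, P E ⊆ E ∧ (P E).card = 2 ∧ ∀ E' ∈ H, P E ⊆ E' → E' = E)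
    (hfull : ∀ E ∈ H, (∃ Q ⊆ E, Q.card = 2 ∧ ∀ E' ∈ H, Q ⊆ E' → E' = E) → E ∈ H₁) :
    CycleFree (pairGraph H₁ P) (2 * k) ∧
      H₁.card = (pairGraph H₁ P).edgeSet.ncard := by
  constructor
  · -- cycle-free part
    intro a c hc hlen
    apply hB
    have hadj : ∀ i : Fin (2 * k), ∃ E, E ∈ H₁ ∧ ∃ u v, u ≠ v ∧ P E = {u, v} ∧
        s(c.getVert ↑i, c.getVert (↑i + 1)) = s(u, v) := by
      intro i
      have h := c.adj_getVert_succ (i := ↑i) (by rw [hlen]; exact i.isLt)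
      unfold pairGraph at h
      rw [SimpleGraph.fromEdgeSet_adj] at h
      obtain ⟨⟨E, hE, u, v, huv, hPE, he⟩, _⟩ := h
      exact ⟨E, hE, u, v, huv, hPE, he⟩
    choose E hE u w huw hPE hs using hadj
    have hset : ∀ i : Fin (2 * k),
        ({c.getVert ↑i, c.getVert (↑i + 1)} : Finset V) = P (E i) := by
      intro i
      rw [hPE i]
      exact sym2_to_finset_pair (hs i)
    refine ⟨E, fun j => c.getVert ↑j, ?_, ?_, fun i => hsub (hE i), ?_⟩
    · -- E injective
      intro i j hij
      have hPij : P (E i) = P (E j) := by rw [hij]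
      have hsym : s(u i, w i) = s(u j, w j) :=
        finset_pair_to_sym2 (by rw [← hPE i, ← hPE j, hPij]) (huw i) (huw j)
      have hi' : (↑i : ℕ) < c.edges.length := by
        rw [Walk.length_edges, hlen]; exact i.isLt
      have hj' : (↑j : ℕ) < c.edges.length := by
        rw [Walk.length_edges, hlen]; exact j.isLt
      have hedge : c.edges[(↑i : ℕ)]'hi' = c.edges[(↑j : ℕ)]'hj' := by
        rw [edges_getElem', edges_getElem', hs i, hs j, hsym]
      rw [hc.edges_nodup.getElem_inj_iff] at hedge
      exact Fin.ext hedge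
    · -- vertex injective
      intro i j hij
      exact Fin.ext (cycle_getVert_inj' hc (by rw [hlen]; exact i.isLt)
        (by rw [hlen]; exact j.isLt) hij)
    · intro i
      constructor
      · apply (hP (E i) (hE i)).1
        rw [← hset i]
        simp
      · show c.getVert ((↑i + 1) % (2 * k)) ∈ E i
        have heq : c.getVert ((↑i + 1) % (2 * k)) = c.getVert (↑i + 1) := by
          rcases Nat.lt_or_ge (↑i + 1) (2 * k) with h | h
          · rw [Nat.mod_eq_of_lt h]
          · have h2 : (↑i : ℕ) + 1 = 2 * k := by have := i.isLt; omega
            rw [h2, Nat.mod_self, Walk.getVert_zero, ← hlen, Walk.getVert_length]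
        rw [heq]
        apply (hP (E i) (hE i)).1
        rw [← hset i]
        simp
  · -- cardinality part
    rcases H₁.eq_empty_or_nonempty with rfl | ⟨E₀, hE₀⟩
    · have : (pairGraph (∅ : Finset (Finset V)) P).edgeSet = ∅ := by
        unfold pairGraph
        rw [SimpleGraph.edgeSet_fromEdgeSet]
        ext e
        simp
      simp [this]
    · classical
      obtain ⟨u₀, v₀, huv₀, hP₀⟩ := Finset.card_eq_two.mp (hP E₀ hE₀).2.1
      set pe : Finset V → Sym2 V := fun A =>
        if h : ∃ x y : V, x ≠ y ∧ P A = {x, y} then s(h.choose, h.choose_spec.choose)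
        else s(u₀, u₀) with hpe_def
      have hpe : ∀ A ∈ H₁, ∃ x y, x ≠ y ∧ P A = {x, y} ∧ pe A = s(x, y) := by
        intro A hA
        obtain ⟨x, y, hxy, hPA⟩ := Finset.card_eq_two.mp (hP A hA).2.1
        have hex : ∃ x y : V, x ≠ y ∧ P A = {x, y} := ⟨x, y, hxy, hPA⟩
        exact ⟨hex.choose, hex.choose_spec.choose, hex.choose_spec.choose_spec.1,
          hex.choose_spec.choose_spec.2, by simp only [hpe_def, dif_pos hex]⟩
      have hES : (pairGraph H₁ P).edgeSet = ↑(H₁.image pe) := by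
        ext e
        unfold pairGraph
        rw [SimpleGraph.edgeSet_fromEdgeSet]
        simp only [Set.mem_diff, Set.mem_setOf_eq, Finset.coe_image, Set.mem_image,
          Finset.mem_coe]
        constructor
        · rintro ⟨⟨A, hA, x, y, hxy, hPA, rfl⟩, _⟩
          refine ⟨A, hA, ?_⟩
          obtain ⟨x', y', hxy', hPA', hpeA⟩ := hpe A hA
          rw [hpeA]
          exact finset_pair_to_sym2 (by rw [← hPA', ← hPA]) hxy' hxy
        · rintro ⟨A, hA, rfl⟩
          obtain ⟨x, y, hxy, hPA, hpeA⟩ := hpe A hA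
          exact ⟨⟨A, hA, x, y, hxy, hPA, hpeA⟩, by rw [hpeA]; simp [hxy]⟩
      rw [hES, Set.ncard_coe_finset]
      refine (Finset.card_image_of_injOn ?_).symm
      intro A hA B hB hAB
      obtain ⟨x, y, hxy, hPA, hpA⟩ := hpe A hA
      obtain ⟨x', y', hxy', hPB, hpB⟩ := hpe B hB
      have hsym : s(x, y) = s(x', y') := by rw [← hpA, ← hpB, hAB]
      have hPP : P A = P B := by
        rw [hPA, hPB]; exact sym2_to_finset_pair hsym
      have hABsub : P A ⊆ B := by
        rw [hPP]; exact (hP B hB).1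
      exact ((hP A hA).2.2 B (hsub hB) hABsub).symm
end
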